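/- arXiv:2206.13457 — 12 statements merged into one kernel-verified Lean document; each statement's English description precedes it below -/
import Mathlib

section
/- Let A be an n×n real symmetric matrix and u ∈ ℝⁿ a nonzero vector with uᵀAu ≠ 0, and let μ = (1/2)[uᵀu + uᵀA²u − √((uᵀu − uᵀA²u)² + 4(uᵀAu)²)]. Then μ = 0 if and only if u is an eigenvector of A (i.e., there exists λ ∈ ℝ with Au = λu). Moreover, if Au = λu for some λ ∈ ℝ, then the homogeneous Rayleigh quotient α = [uᵀA²u − uᵀu + √((uᵀA²u − uᵀu)² + 4(uᵀAu)²)]/(2uᵀAu) equals λ. -/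
open Matrix

/-- `μ = 0` if and only if `u` is an eigenvector of `A`; moreover, if `Au = λu`
then the homogeneous Rayleigh quotient `α` equals `λ`. -/
theorem homogeneous_rq_exact_on_eigenvectors
    {n : ℕ} (A : Matrix (Fin n) (Fin n) ℝ) (hA : A.IsSymm)
    (u : Fin n → ℝ) (hu : u ≠ 0) (huAu : u ⬝ᵥ A.mulVec u ≠ 0)
    (μ : ℝ)
    (hμ : μ = (1/2) * (u ⬝ᵥ u + u ⬝ᵥ (A * A).mulVec u -
      Real.sqrt ((u ⬝ᵥ u - u ⬝ᵥ (A * A).mulVec u)^2 + 4 * (u ⬝ᵥ A.mulVec u)^2)))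
    (α : ℝ)
    (hα : α = (u ⬝ᵥ (A * A).mulVec u - u ⬝ᵥ u +
      Real.sqrt ((u ⬝ᵥ (A * A).mulVec u - u ⬝ᵥ u)^2 + 4 * (u ⬝ᵥ A.mulVec u)^2)) /
      (2 * (u ⬝ᵥ A.mulVec u))) :
    (μ = 0 ↔ ∃ lam : ℝ, A.mulVec u = lam • u) ∧
    (∀ lam : ℝ, A.mulVec u = lam • u → α = lam) := by
  set v := A.mulVec u with hv
  set a := u ⬝ᵥ u with ha
  set b := u ⬝ᵥ v with hb
  -- c = u ⬝ᵥ (A*A) u = v ⬝ᵥ v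
  have hc : u ⬝ᵥ (A * A).mulVec u = v ⬝ᵥ v := by
    rw [← Matrix.mulVec_mulVec, Matrix.dotProduct_mulVec, ← Matrix.mulVec_transpose,
      hA.eq]
  set c := v ⬝ᵥ v with hcc
  rw [hc] at hμ hα
  have hselfnn : ∀ w : Fin n → ℝ, 0 ≤ w ⬝ᵥ w := fun w =>
    Finset.sum_nonneg fun i _ => mul_self_nonneg _
  have ha0 : 0 < a := by
    rcases lt_or_eq_of_le (hselfnn u) with h | h
    · exact h
    · exact absurd (dotProduct_self_eq_zero.mp h.symm) hu
  have hc0 : 0 ≤ c := hselfnn v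
  have hbv : v ⬝ᵥ u = b := dotProduct_comm v u
  -- Cauchy–Schwarz: b² ≤ a c, equality iff v parallel to u
  have key : ∀ w : Fin n → ℝ, (a • w - (u ⬝ᵥ w) • u) ⬝ᵥ (a • w - (u ⬝ᵥ w) • u)
      = a * (a * (w ⬝ᵥ w) - (u ⬝ᵥ w)^2) := by
    intro w
    have h1 : w ⬝ᵥ u = u ⬝ᵥ w := dotProduct_comm w u
    simp [sub_dotProduct, dotProduct_sub, smul_dotProduct,
      dotProduct_smul, h1]
    ring
  -- eigen computations
  have eig : ∀ lam : ℝ, v = lam • u → b = lam * a ∧ c = lam ^ 2 * a := by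
    intro lam h
    constructor
    · rw [hb, h, dotProduct_smul, smul_eq_mul, ← ha, mul_comm]
    · rw [hcc, h, smul_dotProduct, dotProduct_smul, smul_eq_mul,
        smul_eq_mul, ← ha]; ring
  constructor
  · constructor
    · intro hμ0
      -- from μ = 0 deduce a*c = b^2
      have hs : Real.sqrt ((a - c)^2 + 4 * b^2) = a + c := by linarith [hμ.symm.trans hμ0]
      have hsq : (a - c)^2 + 4 * b^2 = (a + c)^2 := by
        have := Real.sq_sqrt (by positivity : (0:ℝ) ≤ (a - c)^2 + 4 * b^2)
        rw [hs] at this; linarith [this]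
      have hac : a * c = b ^ 2 := by nlinarith [hsq]
      -- Cauchy–Schwarz equality case
      have hz : (a • v - b • u) ⬝ᵥ (a • v - b • u) = 0 := by
        rw [key v, ← hb, ← hcc]; nlinarith [hac]
      have hz2 : a • v - b • u = 0 := dotProduct_self_eq_zero.mp hz
      refine ⟨b / a, ?_⟩
      have : a • v = b • u := by linear_combination (norm := module) hz2
      funext i
      have := congrFun this i
      simp only [Pi.smul_apply, smul_eq_mul] at this ⊢
      field_simp
      linarith [this]
    · rintro ⟨lam, h⟩
      obtain ⟨hb', hc'⟩ := eig lam h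
      have hsq : (a - c)^2 + 4 * b^2 = (a * (1 + lam^2))^2 := by
        rw [hb', hc']; ring
      have hs : Real.sqrt ((a - c)^2 + 4 * b^2) = a * (1 + lam^2) := by
        rw [hsq, Real.sqrt_sq (by positivity)]
      rw [hμ, hs, hc']; ring
  · intro lam h
    obtain ⟨hb', hc'⟩ := eig lam h
    have hlam : lam ≠ 0 := by
      intro h0; apply huAu; rw [hb', h0]; ring
    have hsq : (c - a)^2 + 4 * b^2 = (a * (1 + lam^2))^2 := by
      rw [hb', hc']; ring
    have hs : Real.sqrt ((c - a)^2 + 4 * b^2) = a * (1 + lam^2) := by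
      rw [hsq, Real.sqrt_sq (by positivity)]
    rw [hα, hs, hb', hc']
    field_simp
    ring
end

section
/- Let A be an n×n real symmetric matrix and u ∈ ℝⁿ a nonzero vector with uᵀAu ≠ 0. Then μ = (1/2)[uᵀu + uᵀA²u − √((uᵀu − uᵀA²u)² + 4(uᵀAu)²)] satisfies 0 ≤ μ < min(uᵀu, uᵀA²u). -/
open Matrix

/-- `μ = (1/2)[uᵀu + uᵀA²u − √((uᵀu − uᵀA²u)² + 4(uᵀAu)²)]` satisfies
`0 ≤ μ < min(uᵀu, uᵀA²u)`. -/
theorem homogeneous_rq_mu_bounds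
    {n : ℕ} (A : Matrix (Fin n) (Fin n) ℝ) (hA : A.IsSymm)
    (u : Fin n → ℝ) (hu : u ≠ 0) (huAu : u ⬝ᵥ A.mulVec u ≠ 0)
    (μ : ℝ)
    (hμ : μ = (1/2) * (u ⬝ᵥ u + u ⬝ᵥ (A * A).mulVec u -
      Real.sqrt ((u ⬝ᵥ u - u ⬝ᵥ (A * A).mulVec u)^2 + 4 * (u ⬝ᵥ A.mulVec u)^2))) :
    0 ≤ μ ∧ μ < min (u ⬝ᵥ u) (u ⬝ᵥ (A * A).mulVec u) := by
  set a := u ⬝ᵥ u with ha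
  set b := u ⬝ᵥ (A * A).mulVec u with hb
  set c := u ⬝ᵥ A.mulVec u with hc
  set v := A.mulVec u with hv
  have hsym : b = v ⬝ᵥ v := by
    rw [hb, ← Matrix.mulVec_mulVec, Matrix.dotProduct_mulVec]
    congr 1
    rw [← hA, Matrix.vecMul_transpose]
  -- Cauchy-Schwarz : c^2 ≤ a * b
  have hcs : c ^ 2 ≤ a * b := by
    have h2 := Finset.sum_mul_sq_le_sq_mul_sq Finset.univ u v
    simpa [hc, hsym, ha, dotProduct, sq, mul_comm] using h2
  -- a > 0
  have hapos : 0 < a := by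
    rcases lt_or_eq_of_le (Finset.sum_nonneg (fun i _ => mul_self_nonneg (u i))) with h | h
    · simpa [ha, dotProduct] using h
    · exfalso; apply hu
      funext i
      have := (Finset.sum_eq_zero_iff_of_nonneg
        (fun i _ => mul_self_nonneg (u i))).1 h.symm i (Finset.mem_univ i)
      simp only [Pi.zero_apply]; nlinarith [this]
  have hbnn : 0 ≤ b := by
    rw [hsym]; exact Finset.sum_nonneg (fun i _ => mul_self_nonneg (v i))
  have hc2 : 0 < c ^ 2 := by positivity
  set s := Real.sqrt ((a - b) ^ 2 + 4 * c ^ 2) with hs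
  have hsnn : 0 ≤ s := Real.sqrt_nonneg _
  have hssq : s ^ 2 = (a - b) ^ 2 + 4 * c ^ 2 := by
    rw [hs, Real.sq_sqrt]; positivity
  have hsle : s ≤ a + b := by
    nlinarith [hssq, hsnn, hcs]
  have hsgt : |a - b| < s := by
    nlinarith [hssq, hsnn, abs_nonneg (a - b), sq_abs (a - b)]
  have h1 : a - b ≤ |a - b| := le_abs_self _
  have h2 : b - a ≤ |a - b| := by rw [abs_sub_comm]; exact le_abs_self _
  refine ⟨by linarith [hμ ▸ le_refl μ] , ?_⟩
  · rw [lt_min_iff]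
    constructor <;> [nlinarith; nlinarith]
end

section
/- Let A be an n×n real symmetric matrix and u ∈ ℝⁿ a nonzero vector with uᵀAu ≠ 0. Let θ = (uᵀAu)/(uᵀu), θ̃ = (uᵀA²u)/(uᵀAu), and α = [uᵀA²u − uᵀu + √((uᵀA²u − uᵀu)² + 4(uᵀAu)²)]/(2uᵀAu). If uᵀAu > 0 then θ ≤ α ≤ θ̃, and if uᵀAu < 0 then θ̃ ≤ α ≤ θ. -/
/-!
Write `p = uᵀu`, `q = uᵀAu`, `r = uᵀA²u = ‖Au‖²`, so that `θ = q / p`, `θ̃ = r / q`, and `α` is the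
root of `q x² - (r - p) x - q` with the sign of `q`. After clearing denominators, both
inequalities reduce to the Cauchy–Schwarz inequality `q² ≤ p r`. Replacing `A` by `-A` flips the
signs of `q`, `θ`, `θ̃` and `α`, so the case `q < 0` follows from the case `q > 0`.
-/

open Matrix

noncomputable def homogeneousRQ (p q r : ℝ) : ℝ :=
  (r - p + √((r - p) ^ 2 + 4 * q ^ 2)) / (2 * q)

section

variable {p q r : ℝ}

lemma homogeneousRQ_neg : homogeneousRQ p (-q) r = -homogeneousRQ p q r := by
  simp only [homogeneousRQ, neg_sq, mul_neg, div_neg]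

lemma homogeneousRQ_le_div (hp : 0 ≤ p) (hq : 0 < q) (hcs : q ^ 2 ≤ p * r) :
    homogeneousRQ p q r ≤ r / q := by
  have hr : 0 ≤ r := nonneg_of_mul_nonneg_right (by nlinarith) (by nlinarith)
  have hsqrt : √((r - p) ^ 2 + 4 * q ^ 2) ≤ r + p :=
    (Real.sqrt_le_left (by linarith)).2 (by nlinarith)
  rw [homogeneousRQ, div_le_div_iff₀ (by positivity) hq]
  nlinarith

lemma div_le_homogeneousRQ (hp : 0 ≤ p) (hq : 0 < q) (hcs : q ^ 2 ≤ p * r) :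
    q / p ≤ homogeneousRQ p q r := by
  have hp₀ : 0 < p := lt_of_le_of_ne hp (by rintro rfl; nlinarith)
  set s := √((r - p) ^ 2 + 4 * q ^ 2)
  have hs : s ^ 2 = (r - p) ^ 2 + 4 * q ^ 2 := Real.sq_sqrt (by positivity)
  -- `(2q² - p(r - p))² = p² s² - 4q²(pr - q²)`
  have hsq : (2 * q ^ 2 - p * (r - p)) ^ 2 ≤ (p * s) ^ 2 := by
    rw [mul_pow, hs]
    nlinarith [mul_nonneg (sq_nonneg q) (sub_nonneg.2 hcs)]
  have hlin : 2 * q ^ 2 - p * (r - p) ≤ p * s :=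
    (abs_le_of_sq_le_sq' hsq (by positivity)).2
  rw [homogeneousRQ, div_le_div_iff₀ hp₀ (by positivity)]
  nlinarith

end

lemma dotProduct_sq_le_dotProduct_self_mul {R ι : Type*} [CommRing R] [LinearOrder R]
    [IsStrictOrderedRing R] [Fintype ι] (u v : ι → R) :
    (u ⬝ᵥ v) ^ 2 ≤ (u ⬝ᵥ u) * (v ⬝ᵥ v) := by
  simpa only [dotProduct, sq] using Finset.sum_mul_sq_le_sq_mul_sq Finset.univ u v

lemma Matrix.IsSymm.dotProduct_mul_self_mulVec {R ι : Type*} [CommSemiring R] [Fintype ι]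
    {A : Matrix ι ι R} (hA : A.IsSymm) (u : ι → R) :
    u ⬝ᵥ (A * A) *ᵥ u = A *ᵥ u ⬝ᵥ A *ᵥ u := by
  rw [← mulVec_mulVec, dotProduct_mulVec, ← mulVec_transpose, hA.eq]

theorem homogeneous_rq_between_general
    {n : ℕ} (A : Matrix (Fin n) (Fin n) ℝ) (hA : A.IsSymm)
    (u : Fin n → ℝ)
    (θ θt α : ℝ)
    (hθ : θ = (u ⬝ᵥ A.mulVec u) / (u ⬝ᵥ u))
    (hθt : θt = (u ⬝ᵥ (A * A).mulVec u) / (u ⬝ᵥ A.mulVec u))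
    (hα : α = (u ⬝ᵥ (A * A).mulVec u - u ⬝ᵥ u +
      Real.sqrt ((u ⬝ᵥ (A * A).mulVec u - u ⬝ᵥ u)^2 + 4 * (u ⬝ᵥ A.mulVec u)^2)) /
      (2 * (u ⬝ᵥ A.mulVec u))) :
    (0 < u ⬝ᵥ A.mulVec u → θ ≤ α ∧ α ≤ θt) ∧
    (u ⬝ᵥ A.mulVec u < 0 → θt ≤ α ∧ α ≤ θ) := by
  have hp : 0 ≤ u ⬝ᵥ u := by simpa using dotProduct_self_star_nonneg u
  have hcs : (u ⬝ᵥ A *ᵥ u) ^ 2 ≤ (u ⬝ᵥ u) * (u ⬝ᵥ (A * A) *ᵥ u) := by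
    rw [hA.dotProduct_mul_self_mulVec]
    exact dotProduct_sq_le_dotProduct_self_mul u (A *ᵥ u)
  set p := u ⬝ᵥ u
  set q := u ⬝ᵥ A *ᵥ u
  set r := u ⬝ᵥ (A * A) *ᵥ u
  have hα : α = homogeneousRQ p q r := hα
  subst hθ hθt hα
  refine ⟨fun hq => ⟨div_le_homogeneousRQ hp hq hcs, homogeneousRQ_le_div hp hq hcs⟩,
    fun hq => ?_⟩
  have hq' : 0 < -q := neg_pos.2 hq
  have hcs' : (-q) ^ 2 ≤ p * r := by rwa [neg_sq]
  have lower := div_le_homogeneousRQ hp hq' hcs'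
  have upper := homogeneousRQ_le_div hp hq' hcs'
  rw [homogeneousRQ_neg, neg_div] at lower
  rw [homogeneousRQ_neg, div_neg] at upper
  exact ⟨neg_le_neg_iff.1 upper, neg_le_neg_iff.1 lower⟩

/-- The homogeneous Rayleigh quotient `α` lies between the standard Rayleigh
quotient `θ = uᵀAu/uᵀu` and the harmonic Rayleigh quotient `θ̃ = uᵀA²u/uᵀAu`:
`θ ≤ α ≤ θ̃` if `uᵀAu > 0`, and `θ̃ ≤ α ≤ θ` if `uᵀAu < 0`. -/
theorem homogeneous_rq_between
    {n : ℕ} (A : Matrix (Fin n) (Fin n) ℝ) (hA : A.IsSymm)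
    (u : Fin n → ℝ) (hu : u ≠ 0) (huAu : u ⬝ᵥ A.mulVec u ≠ 0)
    (θ θt α : ℝ)
    (hθ : θ = (u ⬝ᵥ A.mulVec u) / (u ⬝ᵥ u))
    (hθt : θt = (u ⬝ᵥ (A * A).mulVec u) / (u ⬝ᵥ A.mulVec u))
    (hα : α = (u ⬝ᵥ (A * A).mulVec u - u ⬝ᵥ u +
      Real.sqrt ((u ⬝ᵥ (A * A).mulVec u - u ⬝ᵥ u)^2 + 4 * (u ⬝ᵥ A.mulVec u)^2)) /
      (2 * (u ⬝ᵥ A.mulVec u))) :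
    (0 < u ⬝ᵥ A.mulVec u → θ ≤ α ∧ α ≤ θt) ∧
    (u ⬝ᵥ A.mulVec u < 0 → θt ≤ α ∧ α ≤ θ) :=
  homogeneous_rq_between_general A hA u θ θt α hθ hθt hα
end

section
/- Let A be an n×n real symmetric matrix and u ∈ ℝⁿ a nonzero vector with uᵀAu ≠ 0, and let α = [uᵀA²u − uᵀu + √((uᵀA²u − uᵀu)² + 4(uᵀAu)²)]/(2uᵀAu) (which is nonzero). Then the nonlinear Galerkin condition uᵀ(A + α⁻¹I)(A − αI)u = 0 holds; in particular, the vectors (A − αI)u and (A + α⁻¹I)u are orthogonal, and α equals the harmonic Rayleigh quotient with target τ = −α⁻¹, i.e., α = (uᵀ(A − τI)Au)/(uᵀ(A − τI)u) with τ = −α⁻¹. -/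
open Matrix

/-- The homogeneous Rayleigh quotient `α` is nonzero and satisfies the nonlinear
Galerkin condition `uᵀ(A + α⁻¹I)(A − αI)u = 0`; in particular `(A − αI)u ⊥ (A + α⁻¹I)u`, and
`α` equals the harmonic Rayleigh quotient with target `τ = −α⁻¹`. -/
theorem homogeneous_rq_galerkin
    {n : ℕ} (A : Matrix (Fin n) (Fin n) ℝ) (hA : A.IsSymm)
    (u : Fin n → ℝ) (hu : u ≠ 0) (huAu : u ⬝ᵥ A.mulVec u ≠ 0)
    (α : ℝ)
    (hα : α = (u ⬝ᵥ (A * A).mulVec u - u ⬝ᵥ u +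
      Real.sqrt ((u ⬝ᵥ (A * A).mulVec u - u ⬝ᵥ u)^2 + 4 * (u ⬝ᵥ A.mulVec u)^2)) /
      (2 * (u ⬝ᵥ A.mulVec u))) :
    α ≠ 0 ∧
    u ⬝ᵥ ((A + α⁻¹ • (1 : Matrix (Fin n) (Fin n) ℝ)) *
      (A - α • (1 : Matrix (Fin n) (Fin n) ℝ))).mulVec u = 0 ∧
    ((A - α • (1 : Matrix (Fin n) (Fin n) ℝ)).mulVec u) ⬝ᵥ
      ((A + α⁻¹ • (1 : Matrix (Fin n) (Fin n) ℝ)).mulVec u) = 0 ∧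
    α = (u ⬝ᵥ ((A - (-α⁻¹) • (1 : Matrix (Fin n) (Fin n) ℝ)) * A).mulVec u) /
      (u ⬝ᵥ (A - (-α⁻¹) • (1 : Matrix (Fin n) (Fin n) ℝ)).mulVec u) := by
  set a := u ⬝ᵥ (A * A).mulVec u with ha
  set b := u ⬝ᵥ A.mulVec u with hb
  set c := u ⬝ᵥ u with hc
  set s := Real.sqrt ((a - c)^2 + 4*b^2) with hs
  have hcnn : (0:ℝ) ≤ c := Finset.sum_nonneg fun i _ => mul_self_nonneg (u i)
  have hcpos : 0 < c := by
    rcases lt_or_eq_of_le hcnn with h | h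
    · exact h
    · exact absurd (dotProduct_self_eq_zero.mp h.symm) hu
  have hsnn : 0 ≤ s := Real.sqrt_nonneg _
  have hs2 : s^2 = (a - c)^2 + 4*b^2 := Real.sq_sqrt (by positivity)
  have hb2 : 0 < b^2 := by positivity
  have hpos : 0 < a - c + s := by nlinarith [sq_nonneg (s - (a - c)), sq_nonneg (s + (a - c))]
  have hkey : 2 * b * α = a - c + s := by rw [hα]; field_simp
  have hs' : s = 2*b*α - (a - c) := by linarith
  have h5 : (2*b*α - (a - c))^2 = (a - c)^2 + 4*b^2 := by rw [← hs']; exact hs2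
  have h4 : b * (b * α^2 - (a - c) * α - b) = 0 := by linear_combination h5/4
  have hq : b * α^2 - (a - c) * α - b = 0 := by
    rcases mul_eq_zero.mp h4 with h | h
    · exact absurd h huAu
    · exact h
  have hαb : 0 < α * b := by nlinarith
  have hα0 : α ≠ 0 := by
    intro h; rw [h] at hαb; simp at hαb
  -- vector computations
  set v := A.mulVec u with hv
  have hvu : v ⬝ᵥ u = b := dotProduct_comm v u
  have hvA : v ᵥ* A = (A * A).mulVec u := by
    rw [← Matrix.mulVec_transpose, hA.eq, hv, Matrix.mulVec_mulVec]
  have hvv : v ⬝ᵥ v = a := by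
    rw [hv, Matrix.dotProduct_mulVec, ← hv, hvA, dotProduct_comm, ← ha]
  have huw : u ⬝ᵥ A.mulVec v = a := by
    rw [hv, Matrix.mulVec_mulVec, ← ha]
  have key2 : ∀ x y : ℝ, u ⬝ᵥ ((A + x • (1 : Matrix (Fin n) (Fin n) ℝ)) *
      (A - y • (1 : Matrix (Fin n) (Fin n) ℝ))).mulVec u = a - y*b + x*b - (x*y)*c := by
    intro x y
    rw [← Matrix.mulVec_mulVec]
    simp only [Matrix.sub_mulVec, Matrix.add_mulVec, Matrix.smul_mulVec,
      Matrix.one_mulVec, Matrix.mulVec_sub, Matrix.mulVec_smul,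
      dotProduct_sub, dotProduct_add, dotProduct_smul, smul_eq_mul, smul_sub,
      huw, ← hv, ← hb, ← hc]
    ring
  have galerkin : u ⬝ᵥ ((A + α⁻¹ • (1 : Matrix (Fin n) (Fin n) ℝ)) *
      (A - α • (1 : Matrix (Fin n) (Fin n) ℝ))).mulVec u = 0 := by
    rw [key2]
    field_simp
    linear_combination -hq
  refine ⟨hα0, galerkin, ?_, ?_⟩
  · have : (A - α • (1 : Matrix (Fin n) (Fin n) ℝ)).mulVec u ⬝ᵥ
        (A + α⁻¹ • (1 : Matrix (Fin n) (Fin n) ℝ)).mulVec u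
        = a + α⁻¹*b - α*b - (α*α⁻¹)*c := by
      simp only [Matrix.sub_mulVec, Matrix.add_mulVec, Matrix.smul_mulVec,
        Matrix.one_mulVec, dotProduct_sub, dotProduct_add, dotProduct_smul,
        sub_dotProduct, add_dotProduct, smul_dotProduct, smul_eq_mul,
        hvv, hvu, ← hv, ← hb, ← hc]
      ring
    rw [this]
    field_simp
    linear_combination -hq
  · have hN : u ⬝ᵥ ((A - (-α⁻¹) • (1 : Matrix (Fin n) (Fin n) ℝ)) * A).mulVec u
        = a + α⁻¹*b := by
      rw [← Matrix.mulVec_mulVec]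
      simp only [Matrix.sub_mulVec, Matrix.smul_mulVec, Matrix.one_mulVec,
        dotProduct_sub, dotProduct_smul, smul_eq_mul, huw, ← hv, ← hb]
      ring
    have hD : u ⬝ᵥ (A - (-α⁻¹) • (1 : Matrix (Fin n) (Fin n) ℝ)).mulVec u
        = b + α⁻¹*c := by
      simp only [Matrix.sub_mulVec, Matrix.smul_mulVec, Matrix.one_mulVec,
        dotProduct_sub, dotProduct_smul, smul_eq_mul, ← hv, ← hb, ← hc]
      ring
    rw [hN, hD]
    have hD0 : b + α⁻¹*c ≠ 0 := by
      intro h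
      have : α * (b + α⁻¹*c) = 0 := by rw [h]; ring
      rw [mul_add, ← mul_assoc, mul_inv_cancel₀ hα0, one_mul] at this
      nlinarith
    rw [eq_div_iff hD0]
    field_simp
    linear_combination hq
end

section
/- Let A be an n×n real symmetric positive definite matrix with smallest eigenvalue λ₁ and largest eigenvalue λₙ, and let u ∈ ℝⁿ be a nonzero vector. Let θ = (uᵀAu)/(uᵀu), θ̃ = (uᵀA²u)/(uᵀAu), and α = [uᵀA²u − uᵀu + √((uᵀA²u − uᵀu)² + 4(uᵀAu)²)]/(2uᵀAu). Then λ₁ ≤ θ ≤ α ≤ θ̃ ≤ λₙ; in particular θ − λ₁ ≤ α − λ₁ ≤ θ̃ − λ₁ and λₙ − θ̃ ≤ λₙ − α ≤ λₙ − θ. -/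
/-!
Expand `u` in an orthonormal eigenbasis of `A` with coordinates `wᵢ` and write
`c = uᵀu = ∑ wᵢ²`, `a = uᵀAu = ∑ λᵢ wᵢ²`, `d = uᵀA²u = ∑ λᵢ² wᵢ²`. Then `λ₁ c ≤ a`, `d ≤ λₙ a`,
and Cauchy–Schwarz gives `a² ≤ c d`. The homogeneous Rayleigh quotient `α` is the positive root
of `p(t) = a t² - (d - c) t - a`, and
`p(a / c) = a (a² - c d) / c² ≤ 0 ≤ (c d - a²) / a = p(d / a)`, so `θ = a / c ≤ α ≤ d / a = θ̃`.
-/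

open Matrix

/-- The positive root of `a t² - b t - a`, for `0 < a`. -/
noncomputable def posRoot (a b : ℝ) : ℝ :=
  (b + √(b ^ 2 + 4 * a ^ 2)) / (2 * a)

section posRoot

variable {a b c d t : ℝ}

theorem le_posRoot_of_nonpos (ha : 0 < a) (ht : a * t ^ 2 - b * t - a ≤ 0) :
    t ≤ posRoot a b := by
  rw [posRoot, le_div_iff₀ (by positivity)]
  have hsq : (2 * a * t - b) ^ 2 ≤ b ^ 2 + 4 * a ^ 2 := by nlinarith
  linarith [(le_abs_self _).trans (Real.abs_le_sqrt hsq)]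

theorem posRoot_le_of_nonneg (ha : 0 < a) (ht₀ : 0 ≤ t) (ht : 0 ≤ a * t ^ 2 - b * t - a) :
    posRoot a b ≤ t := by
  rw [posRoot, div_le_iff₀ (by positivity)]
  have ht_pos : 0 < t := ht₀.lt_of_ne (by rintro rfl; linarith)
  have hroot : √(b ^ 2 + 4 * a ^ 2) ≤ 2 * a * t - b := by
    rw [Real.sqrt_le_iff]
    constructor <;> nlinarith
  linarith

theorem div_le_posRoot (ha : 0 < a) (hc : 0 < c) (hcd : a ^ 2 ≤ c * d) :
    a / c ≤ posRoot a (d - c) := by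
  refine le_posRoot_of_nonpos ha ?_
  have hp : a * (a / c) ^ 2 - (d - c) * (a / c) - a = a * (a ^ 2 - c * d) / c ^ 2 := by
    field_simp
    ring
  rw [hp]
  exact div_nonpos_of_nonpos_of_nonneg (mul_nonpos_of_nonneg_of_nonpos ha.le (by linarith))
    (sq_nonneg c)

theorem posRoot_le_div (ha : 0 < a) (hc : 0 ≤ c) (hcd : a ^ 2 ≤ c * d) :
    posRoot a (d - c) ≤ d / a := by
  have hd : 0 ≤ d := by nlinarith
  refine posRoot_le_of_nonneg ha (by positivity) ?_
  have hp : a * (d / a) ^ 2 - (d - c) * (d / a) - a = (c * d - a ^ 2) / a := by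
    field_simp
    ring
  rw [hp]
  exact div_nonneg (by linarith) ha.le

end posRoot

theorem dotProduct_mulVec_eq_sum_of_mulVec_orthonormalBasis {ι m : Type*} [Fintype ι]
    [Fintype m] (b : OrthonormalBasis ι ℝ (EuclideanSpace ℝ m)) {M : Matrix m m ℝ} {ν : ι → ℝ}
    (hM : ∀ i, M *ᵥ b i = ν i • b i) (u : m → ℝ) :
    u ⬝ᵥ M *ᵥ u = ∑ i, ν i * (b i ⬝ᵥ u) ^ 2 := by
  have hu : u = ∑ i, (b i ⬝ᵥ u) • ⇑(b i) := by
    have := congrArg WithLp.ofLp (b.sum_repr' (WithLp.toLp 2 u))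
    simpa [EuclideanSpace.inner_eq_star_dotProduct, dotProduct_comm] using this.symm
  conv_lhs => arg 2; rw [hu]
  simp only [mulVec_sum, mulVec_smul, hM, dotProduct_sum, dotProduct_smul, smul_eq_mul]
  refine Finset.sum_congr rfl fun i _ => ?_
  rw [dotProduct_comm u]
  ring

theorem dotProduct_self_eq_sum_of_orthonormalBasis {ι m : Type*} [Fintype ι] [Fintype m]
    [DecidableEq m] (b : OrthonormalBasis ι ℝ (EuclideanSpace ℝ m)) (u : m → ℝ) :
    u ⬝ᵥ u = ∑ i, (b i ⬝ᵥ u) ^ 2 := by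
  simpa using dotProduct_mulVec_eq_sum_of_mulVec_orthonormalBasis b (M := 1) (ν := 1) (by simp) u

namespace Matrix.IsHermitian

variable {m : Type*} [Fintype m] [DecidableEq m] {A : Matrix m m ℝ} (u : m → ℝ)

theorem eigenvectorBasis_ne_zero {𝕜 : Type*} [RCLike 𝕜] {B : Matrix m m 𝕜} (hB : B.IsHermitian)
    (i : m) : (hB.eigenvectorBasis i : m → 𝕜) ≠ 0 := fun h =>
  hB.eigenvectorBasis.orthonormal.ne_zero i (congrArg (WithLp.toLp 2) h)

theorem dotProduct_mulVec_eq_sum (hA : A.IsHermitian) :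
    u ⬝ᵥ A *ᵥ u = ∑ i, hA.eigenvalues i * (hA.eigenvectorBasis i ⬝ᵥ u) ^ 2 :=
  dotProduct_mulVec_eq_sum_of_mulVec_orthonormalBasis _ hA.mulVec_eigenvectorBasis u

theorem dotProduct_mul_self_mulVec_eq_sum (hA : A.IsHermitian) :
    u ⬝ᵥ (A * A) *ᵥ u = ∑ i, hA.eigenvalues i ^ 2 * (hA.eigenvectorBasis i ⬝ᵥ u) ^ 2 :=
  dotProduct_mulVec_eq_sum_of_mulVec_orthonormalBasis _ (fun i => by
    rw [← mulVec_mulVec, hA.mulVec_eigenvectorBasis, mulVec_smul, hA.mulVec_eigenvectorBasis,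
      smul_smul, sq]) u

theorem mul_dotProduct_self_le (hA : A.IsHermitian) {l : ℝ} (hl : ∀ i, l ≤ hA.eigenvalues i) :
    l * (u ⬝ᵥ u) ≤ u ⬝ᵥ A *ᵥ u := by
  rw [dotProduct_self_eq_sum_of_orthonormalBasis hA.eigenvectorBasis, hA.dotProduct_mulVec_eq_sum,
    Finset.mul_sum]
  exact Finset.sum_le_sum fun i _ => mul_le_mul_of_nonneg_right (hl i) (sq_nonneg _)

theorem sq_dotProduct_mulVec_le (hA : A.IsHermitian) :
    (u ⬝ᵥ A *ᵥ u) ^ 2 ≤ (u ⬝ᵥ u) * (u ⬝ᵥ (A * A) *ᵥ u) := by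
  rw [dotProduct_self_eq_sum_of_orthonormalBasis hA.eigenvectorBasis,
    hA.dotProduct_mulVec_eq_sum, hA.dotProduct_mul_self_mulVec_eq_sum]
  exact Finset.sum_sq_le_sum_mul_sum_of_sq_le_mul _ (fun i _ => sq_nonneg _)
    (fun i _ => by positivity) (fun i _ => (by ring : _ = _).le)

end Matrix.IsHermitian

theorem Matrix.PosSemidef.dotProduct_mul_self_mulVec_le {m : Type*} [Fintype m] [DecidableEq m]
    {A : Matrix m m ℝ} (hA : A.PosSemidef) {L : ℝ} (hL : ∀ i, hA.1.eigenvalues i ≤ L)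
    (u : m → ℝ) : u ⬝ᵥ (A * A) *ᵥ u ≤ L * (u ⬝ᵥ A *ᵥ u) := by
  rw [hA.1.dotProduct_mul_self_mulVec_eq_sum, hA.1.dotProduct_mulVec_eq_sum, Finset.mul_sum]
  refine Finset.sum_le_sum fun i _ => ?_
  rw [← mul_assoc, sq]
  exact mul_le_mul_of_nonneg_right
    (mul_le_mul_of_nonneg_right (hL i) (hA.eigenvalues_nonneg i)) (sq_nonneg _)

theorem homogeneous_rq_spd_ordering_general
    {n : ℕ} (A : Matrix (Fin n) (Fin n) ℝ) (hA : A.PosDef)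
    (lam1 lamn : ℝ)
    (hlam1min : ∀ (ν : ℝ) (v : Fin n → ℝ), v ≠ 0 → A.mulVec v = ν • v → lam1 ≤ ν)
    (hlamnmax : ∀ (ν : ℝ) (v : Fin n → ℝ), v ≠ 0 → A.mulVec v = ν • v → ν ≤ lamn)
    (u : Fin n → ℝ) (hu : u ≠ 0)
    (θ θt α : ℝ)
    (hθ : θ = (u ⬝ᵥ A.mulVec u) / (u ⬝ᵥ u))
    (hθt : θt = (u ⬝ᵥ (A * A).mulVec u) / (u ⬝ᵥ A.mulVec u))
    (hα : α = (u ⬝ᵥ (A * A).mulVec u - u ⬝ᵥ u +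
      Real.sqrt ((u ⬝ᵥ (A * A).mulVec u - u ⬝ᵥ u)^2 + 4 * (u ⬝ᵥ A.mulVec u)^2)) /
      (2 * (u ⬝ᵥ A.mulVec u))) :
    (lam1 ≤ θ ∧ θ ≤ α ∧ α ≤ θt ∧ θt ≤ lamn) ∧
    (θ - lam1 ≤ α - lam1 ∧ α - lam1 ≤ θt - lam1) ∧
    (lamn - θt ≤ lamn - α ∧ lamn - α ≤ lamn - θ) := by
  have hH := hA.isHermitian
  have hc : 0 < u ⬝ᵥ u := by simpa using dotProduct_self_star_pos_iff.2 hu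
  have ha : 0 < u ⬝ᵥ A *ᵥ u := by simpa using hA.dotProduct_mulVec_pos hu
  have hcd := hH.sq_dotProduct_mulVec_le u
  have hα' : α = posRoot (u ⬝ᵥ A *ᵥ u) (u ⬝ᵥ (A * A) *ᵥ u - u ⬝ᵥ u) := hα
  have hlam1 : lam1 ≤ θ := by
    rw [hθ, le_div_iff₀ hc]
    exact hH.mul_dotProduct_self_le u fun i =>
      hlam1min _ _ (hH.eigenvectorBasis_ne_zero i) (hH.mulVec_eigenvectorBasis i)
  have hlamn : θt ≤ lamn := by
    rw [hθt, div_le_iff₀ ha]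
    exact hA.posSemidef.dotProduct_mul_self_mulVec_le (fun i =>
      hlamnmax _ _ (hH.eigenvectorBasis_ne_zero i) (hH.mulVec_eigenvectorBasis i)) u
  have hθα : θ ≤ α := hθ ▸ hα' ▸ div_le_posRoot ha hc hcd
  have hαθt : α ≤ θt := hθt ▸ hα' ▸ posRoot_le_div ha hc.le hcd
  exact ⟨⟨hlam1, hθα, hαθt, hlamn⟩, ⟨by linarith, by linarith⟩, ⟨by linarith, by linarith⟩⟩

/-- For an SPD matrix `A` with smallest eigenvalue `λ₁` and largest eigenvalue
`λₙ`, and a nonzero vector `u`, the Rayleigh quotient `θ`, the homogeneous Rayleigh quotient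
`α`, and the harmonic Rayleigh quotient `θ̃` satisfy `λ₁ ≤ θ ≤ α ≤ θ̃ ≤ λₙ`; in particular
`θ − λ₁ ≤ α − λ₁ ≤ θ̃ − λ₁` and `λₙ − θ̃ ≤ λₙ − α ≤ λₙ − θ`. -/
theorem homogeneous_rq_spd_ordering
    {n : ℕ} (A : Matrix (Fin n) (Fin n) ℝ) (hA : A.PosDef)
    (lam1 lamn : ℝ)
    (hlam1 : ∃ v : Fin n → ℝ, v ≠ 0 ∧ A.mulVec v = lam1 • v)
    (hlamn : ∃ v : Fin n → ℝ, v ≠ 0 ∧ A.mulVec v = lamn • v)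
    (hlam1min : ∀ (ν : ℝ) (v : Fin n → ℝ), v ≠ 0 → A.mulVec v = ν • v → lam1 ≤ ν)
    (hlamnmax : ∀ (ν : ℝ) (v : Fin n → ℝ), v ≠ 0 → A.mulVec v = ν • v → ν ≤ lamn)
    (u : Fin n → ℝ) (hu : u ≠ 0)
    (θ θt α : ℝ)
    (hθ : θ = (u ⬝ᵥ A.mulVec u) / (u ⬝ᵥ u))
    (hθt : θt = (u ⬝ᵥ (A * A).mulVec u) / (u ⬝ᵥ A.mulVec u))
    (hα : α = (u ⬝ᵥ (A * A).mulVec u - u ⬝ᵥ u +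
      Real.sqrt ((u ⬝ᵥ (A * A).mulVec u - u ⬝ᵥ u)^2 + 4 * (u ⬝ᵥ A.mulVec u)^2)) /
      (2 * (u ⬝ᵥ A.mulVec u))) :
    (lam1 ≤ θ ∧ θ ≤ α ∧ α ≤ θt ∧ θt ≤ lamn) ∧
    (θ - lam1 ≤ α - lam1 ∧ α - lam1 ≤ θt - lam1) ∧
    (lamn - θt ≤ lamn - α ∧ lamn - α ≤ lamn - θ) :=
  homogeneous_rq_spd_ordering_general A hA lam1 lamn hlam1min hlamnmax u hu θ θt α hθ hθt hα
end

section
/- Let A be an n×n real symmetric matrix and u ∈ ℝⁿ any vector, and let μ = (1/2)[uᵀu + uᵀA²u − √((uᵀu − uᵀA²u)² + 4(uᵀAu)²)]. Then the homogeneous residual quantity √μ is no larger than the standard and harmonic residual quantities: for every γ ∈ ℝ one has √μ ≤ ‖Au − γu‖, and for every γ ≠ 0 one has √μ ≤ ‖γ⁻¹Au − u‖. -/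
open Matrix

/-- Key scalar inequality: the smaller eigenvalue of `[[a,c],[c,b]]` is below the
quadratic form value `a t² − 2 c t + b`. -/
lemma key_ineq (a b c t : ℝ) (ha : 0 ≤ a) (hb : 0 ≤ b) (hc : c ^ 2 ≤ a * b) :
    (1/2) * (a + b - Real.sqrt ((a - b) ^ 2 + 4 * c ^ 2)) ≤ t ^ 2 * a - 2 * t * c + b := by
  set D := (a - b) ^ 2 + 4 * c ^ 2 with hD
  have hD0 : 0 ≤ D := by positivity
  have hsum : Real.sqrt D ≤ a + b := by
    rw [show a + b = Real.sqrt ((a + b) ^ 2) from (Real.sqrt_sq (by linarith)).symm]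
    apply Real.sqrt_le_sqrt; nlinarith
  have hμ0 : 0 ≤ (1/2) * (a + b - Real.sqrt D) := by linarith
  have hR : (b - a) * (t ^ 2 - 1) + 4 * c * t ≤ Real.sqrt D * (t ^ 2 + 1) := by
    have h1 : ((b - a) * (t ^ 2 - 1) + 4 * c * t) ^ 2 ≤ D * (t ^ 2 + 1) ^ 2 := by
      nlinarith [sq_nonneg ((a - b) * t + c * (t ^ 2 - 1))]
    calc (b - a) * (t ^ 2 - 1) + 4 * c * t
        ≤ |(b - a) * (t ^ 2 - 1) + 4 * c * t| := le_abs_self _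
      _ = Real.sqrt (((b - a) * (t ^ 2 - 1) + 4 * c * t) ^ 2) := (Real.sqrt_sq_eq_abs _).symm
      _ ≤ Real.sqrt (D * (t ^ 2 + 1) ^ 2) := Real.sqrt_le_sqrt h1
      _ = Real.sqrt D * (t ^ 2 + 1) := by
          rw [Real.sqrt_mul hD0, Real.sqrt_sq (by positivity)]
  nlinarith [mul_nonneg hμ0 (sq_nonneg t)]

/-- The homogeneous residual quantity `√μ`, where
`μ = (1/2)[uᵀu + uᵀA²u − √((uᵀu − uᵀA²u)² + 4(uᵀAu)²)]`, is no larger than the standard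
residual `‖Au − γu‖` for every `γ`, and no larger than the harmonic residual `‖γ⁻¹Au − u‖`
for every `γ ≠ 0`. (Euclidean norms written as `√(v ⬝ᵥ v)`.) -/
theorem homogeneous_residual_smallest
    {n : ℕ} (A : Matrix (Fin n) (Fin n) ℝ) (hA : A.IsSymm)
    (u : Fin n → ℝ)
    (μ : ℝ)
    (hμ : μ = (1/2) * (u ⬝ᵥ u + u ⬝ᵥ (A * A).mulVec u -
      Real.sqrt ((u ⬝ᵥ u - u ⬝ᵥ (A * A).mulVec u)^2 + 4 * (u ⬝ᵥ A.mulVec u)^2))) :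
    (∀ γ : ℝ, Real.sqrt μ ≤
      Real.sqrt ((A.mulVec u - γ • u) ⬝ᵥ (A.mulVec u - γ • u))) ∧
    (∀ γ : ℝ, γ ≠ 0 → Real.sqrt μ ≤
      Real.sqrt ((γ⁻¹ • A.mulVec u - u) ⬝ᵥ (γ⁻¹ • A.mulVec u - u))) := by
  set a := u ⬝ᵥ u with ha'
  set b := u ⬝ᵥ (A * A).mulVec u with hb'
  set c := u ⬝ᵥ A.mulVec u with hc'
  have hAA : A.mulVec u ⬝ᵥ A.mulVec u = b := by
    rw [hb', ← Matrix.mulVec_mulVec]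
    conv_rhs => rw [Matrix.dotProduct_mulVec, ← Matrix.mulVec_transpose, hA.eq]
  have hcomm : A.mulVec u ⬝ᵥ u = c := dotProduct_comm _ _
  have dpn : ∀ v : Fin n → ℝ, 0 ≤ v ⬝ᵥ v := fun v =>
    Finset.sum_nonneg fun i _ => mul_self_nonneg (v i)
  have ha0 : 0 ≤ a := by rw [ha']; exact dpn u
  have hb0 : 0 ≤ b := by rw [← hAA]; exact dpn _
  have hcab : c ^ 2 ≤ a * b := by
    have h2 : c ^ 2 ≤ (∑ i, u i ^ 2) * (∑ i, A.mulVec u i ^ 2) :=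
      Finset.sum_mul_sq_le_sq_mul_sq Finset.univ u (A.mulVec u)
    calc c ^ 2 ≤ (∑ i, u i ^ 2) * (∑ i, A.mulVec u i ^ 2) := h2
      _ = a * b := by
          rw [ha', ← hAA]
          simp [dotProduct, sq]
  constructor
  · intro γ
    apply Real.sqrt_le_sqrt
    have hexp : (A.mulVec u - γ • u) ⬝ᵥ (A.mulVec u - γ • u)
        = γ ^ 2 * a - 2 * γ * c + b := by
      simp only [dotProduct_sub, sub_dotProduct, dotProduct_smul, smul_dotProduct,
        smul_eq_mul, hAA, hcomm, hc', ha']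
      ring
    rw [hexp, hμ]
    exact key_ineq a b c γ ha0 hb0 hcab
  · intro γ hγ
    apply Real.sqrt_le_sqrt
    have hexp : (γ⁻¹ • A.mulVec u - u) ⬝ᵥ (γ⁻¹ • A.mulVec u - u)
        = (γ⁻¹) ^ 2 * b - 2 * γ⁻¹ * c + a := by
      simp only [dotProduct_sub, sub_dotProduct, dotProduct_smul, smul_dotProduct,
        smul_eq_mul, hAA, hcomm, hc', ha']
      ring
    rw [hexp, hμ]
    have : Real.sqrt ((a - b) ^ 2 + 4 * c ^ 2) = Real.sqrt ((b - a) ^ 2 + 4 * c ^ 2) := by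
      ring_nf
    calc (1/2) * (a + b - Real.sqrt ((a - b) ^ 2 + 4 * c ^ 2))
        = (1/2) * (b + a - Real.sqrt ((b - a) ^ 2 + 4 * c ^ 2)) := by rw [this]; ring
      _ ≤ (γ⁻¹) ^ 2 * b - 2 * γ⁻¹ * c + a :=
          key_ineq b a c γ⁻¹ hb0 ha0 (by linarith [hcab]; )
end

section
/- Let A be an n×n real symmetric matrix (n ≥ 1) and u ∈ ℝⁿ a nonzero vector with uᵀAu ≠ 0. Let μ = (1/2)[uᵀu + uᵀA²u − √((uᵀu − uᵀA²u)² + 4(uᵀAu)²)] and α = [uᵀA²u − uᵀu + √((uᵀA²u − uᵀu)² + 4(uᵀAu)²)]/(2uᵀAu). Then ‖Au − αu‖² = μ(1 + α²), and there exists an eigenvalue λ of A such that |λ − α| ≤ √(μ(1 + α²))/‖u‖; equivalently, the chordal distance satisfies |λ − α|/(√(1 + λ²)·√(1 + α²)) ≤ √μ/(√(1 + λ²)·‖u‖). -/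
/-!
The residual is the Gram form of `(u, Au)` evaluated at `(-α, 1)`: with `a = uᵀu`, `b = uᵀAu`,
`c = uᵀA²u`, it equals `c - 2αb + α²a`. The choice of `α` makes `(-α, 1)` an eigenvector of the
Gram matrix `[[a, b], [b, c]]` for its smaller eigenvalue `μ`, which gives `‖Au - αu‖² = μ(1 + α²)`.
Expanding `u` in an orthonormal eigenbasis of `A` shows that some eigenvalue `λ` satisfies
`|λ - α| ‖u‖ ≤ ‖Au - αu‖`; dividing by `√(1 + λ²) √(1 + α²)` gives the chordal form.
-/

open Matrix

namespace LinearMap.IsSymmetric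

variable {𝕜 E : Type*} [RCLike 𝕜] [NormedAddCommGroup E] [InnerProductSpace 𝕜 E]
  [FiniteDimensional 𝕜 E] {T : E →ₗ[𝕜] E} {n : ℕ}

theorem exists_abs_eigenvalues_sub_mul_norm_le (hT : T.IsSymmetric)
    (hn : Module.finrank 𝕜 E = n) (hpos : 0 < n) (x : E) (α : ℝ) :
    ∃ i, |hT.eigenvalues hn i - α| * ‖x‖ ≤ ‖T x - (α : 𝕜) • x‖ := by
  set b := hT.eigenvectorBasis hn
  set lam := hT.eigenvalues hn
  have : Nonempty (Fin n) := ⟨⟨0, hpos⟩⟩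
  obtain ⟨i, -, hi⟩ := Finset.exists_min_image Finset.univ (fun j => |lam j - α|)
    Finset.univ_nonempty
  have hnorm_sq (y : E) : ‖y‖ ^ 2 = ∑ j, ‖b.repr y j‖ ^ 2 := by
    rw [← b.repr.norm_map, EuclideanSpace.norm_sq_eq]
  have hrepr (j : Fin n) : ‖b.repr (T x - (α : 𝕜) • x) j‖ = |lam j - α| * ‖b.repr x j‖ := by
    rw [map_sub, map_smul, PiLp.sub_apply, PiLp.smul_apply, hT.eigenvectorBasis_apply_self_apply,
      smul_eq_mul, ← sub_mul, norm_mul, ← RCLike.ofReal_sub, RCLike.norm_ofReal]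
  refine ⟨i, (sq_le_sq₀ (by positivity) (norm_nonneg _)).1 ?_⟩
  rw [mul_pow, hnorm_sq, hnorm_sq, Finset.mul_sum]
  refine Finset.sum_le_sum fun j _ => ?_
  rw [hrepr, mul_pow]
  gcongr ?_ ^ 2 * _
  exact hi j (Finset.mem_univ j)

end LinearMap.IsSymmetric

theorem EuclideanSpace.norm_toLp_eq_sqrt_dotProduct {ι : Type*} [Fintype ι] (v : ι → ℝ) :
    ‖WithLp.toLp 2 v‖ = √(v ⬝ᵥ v) := by
  rw [norm_eq_sqrt_real_inner, EuclideanSpace.inner_toLp_toLp, star_trivial]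

theorem Matrix.IsHermitian.exists_eigenvalue_abs_sub_mul_sqrt_le {ι : Type*} [Fintype ι]
    [DecidableEq ι] [Nonempty ι] {A : Matrix ι ι ℝ} (hA : A.IsHermitian) (u : ι → ℝ) (α : ℝ) :
    ∃ lam : ℝ, (∃ x, x ≠ 0 ∧ A *ᵥ x = lam • x) ∧
      |lam - α| * √(u ⬝ᵥ u) ≤ √((A *ᵥ u - α • u) ⬝ᵥ (A *ᵥ u - α • u)) := by
  have hT := isSymmetric_toEuclideanLin_iff.mpr hA
  obtain ⟨i, hi⟩ := hT.exists_abs_eigenvalues_sub_mul_norm_le finrank_euclideanSpace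
    Fintype.card_pos (WithLp.toLp 2 u) α
  have hv := hT.hasEigenvector_eigenvectorBasis finrank_euclideanSpace i
  refine ⟨_, ⟨_, fun h => hv.2 (congrArg (WithLp.toLp 2) h),
    congrArg WithLp.ofLp hv.apply_eq_smul⟩, ?_⟩
  rwa [← EuclideanSpace.norm_toLp_eq_sqrt_dotProduct,
    ← EuclideanSpace.norm_toLp_eq_sqrt_dotProduct]

theorem Matrix.IsSymm.dotProduct_mulVec_sub_smul_self {R ι : Type*} [CommRing R] [Fintype ι]
    {A : Matrix ι ι R} (hA : A.IsSymm) (u : ι → R) (α : R) :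
    (A *ᵥ u - α • u) ⬝ᵥ (A *ᵥ u - α • u) =
      u ⬝ᵥ (A * A) *ᵥ u - 2 * α * (u ⬝ᵥ A *ᵥ u) + α ^ 2 * (u ⬝ᵥ u) := by
  have hAA : A *ᵥ u ⬝ᵥ A *ᵥ u = u ⬝ᵥ (A * A) *ᵥ u := by
    rw [← mulVec_mulVec, dotProduct_mulVec, ← mulVec_transpose, hA.eq, dotProduct_comm]
  have hAu : A *ᵥ u ⬝ᵥ u = u ⬝ᵥ A *ᵥ u := dotProduct_comm _ _
  simp only [sub_dotProduct, dotProduct_sub, smul_dotProduct, dotProduct_smul, smul_eq_mul,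
    hAA, hAu]
  ring

theorem homogeneousRQ_residual_identity {a b c α : ℝ} (hb : b ≠ 0)
    (hα : α = (c - a + √((c - a) ^ 2 + 4 * b ^ 2)) / (2 * b)) :
    c - 2 * α * b + α ^ 2 * a = 1 / 2 * (a + c - √((a - c) ^ 2 + 4 * b ^ 2)) * (1 + α ^ 2) := by
  rw [show (a - c) ^ 2 = (c - a) ^ 2 by ring]
  set s := √((c - a) ^ 2 + 4 * b ^ 2)
  have hs : s ^ 2 = (c - a) ^ 2 + 4 * b ^ 2 := Real.sq_sqrt (by positivity)
  have hαs : 2 * b * α = c - a + s := by rw [hα]; field_simp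
  have hroot : b * α ^ 2 - (c - a) * α - b = 0 := by
    refine (mul_eq_zero.mp ?_).resolve_left (mul_ne_zero four_ne_zero hb)
    linear_combination (2 * b * α - (c - a) + s) * hαs + hs
  linear_combination α * hroot - (1 + α ^ 2) / 2 * hαs

theorem chordal_le_of_abs_sub_le {x y r d : ℝ} (h : |x - y| ≤ r * √(1 + y ^ 2) / d) :
    |x - y| / (√(1 + x ^ 2) * √(1 + y ^ 2)) ≤ r / (√(1 + x ^ 2) * d) := by
  have hy : √(1 + y ^ 2) ≠ 0 := (Real.sqrt_pos.2 (by positivity)).ne'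
  calc |x - y| / (√(1 + x ^ 2) * √(1 + y ^ 2))
      ≤ r * √(1 + y ^ 2) / d / (√(1 + x ^ 2) * √(1 + y ^ 2)) := by gcongr
    _ = r / (√(1 + x ^ 2) * d) := by field_simp

/-- With `μ` and the homogeneous Rayleigh quotient `α` as usual, one has
`‖Au − αu‖² = μ(1 + α²)`, and there exists an eigenvalue `λ` of `A` such that
`|λ − α| ≤ √(μ(1 + α²))/‖u‖`; equivalently, in the chordal metric,
`|λ − α|/(√(1+λ²)√(1+α²)) ≤ √μ/(√(1+λ²)‖u‖)`. -/
theorem homogeneous_rq_chordal_bound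
    {n : ℕ} (hn : 1 ≤ n) (A : Matrix (Fin n) (Fin n) ℝ) (hA : A.IsSymm)
    (u : Fin n → ℝ) (hu : u ≠ 0) (huAu : u ⬝ᵥ A.mulVec u ≠ 0)
    (μ : ℝ)
    (hμ : μ = (1/2) * (u ⬝ᵥ u + u ⬝ᵥ (A * A).mulVec u -
      Real.sqrt ((u ⬝ᵥ u - u ⬝ᵥ (A * A).mulVec u)^2 + 4 * (u ⬝ᵥ A.mulVec u)^2)))
    (α : ℝ)
    (hα : α = (u ⬝ᵥ (A * A).mulVec u - u ⬝ᵥ u +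
      Real.sqrt ((u ⬝ᵥ (A * A).mulVec u - u ⬝ᵥ u)^2 + 4 * (u ⬝ᵥ A.mulVec u)^2)) /
      (2 * (u ⬝ᵥ A.mulVec u))) :
    (A.mulVec u - α • u) ⬝ᵥ (A.mulVec u - α • u) = μ * (1 + α^2) ∧
    ∃ lam : ℝ, (∃ x : Fin n → ℝ, x ≠ 0 ∧ A.mulVec x = lam • x) ∧
      |lam - α| ≤ Real.sqrt (μ * (1 + α^2)) / Real.sqrt (u ⬝ᵥ u) ∧
      |lam - α| / (Real.sqrt (1 + lam^2) * Real.sqrt (1 + α^2)) ≤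
        Real.sqrt μ / (Real.sqrt (1 + lam^2) * Real.sqrt (u ⬝ᵥ u)) := by
  have hres : (A *ᵥ u - α • u) ⬝ᵥ (A *ᵥ u - α • u) = μ * (1 + α ^ 2) := by
    rw [hA.dotProduct_mulVec_sub_smul_self, hμ]
    exact homogeneousRQ_residual_identity huAu hα
  have : Nonempty (Fin n) := ⟨⟨0, hn⟩⟩
  obtain ⟨lam, hlam, hle⟩ :=
    (isHermitian_iff_isSymm.mpr hA).exists_eigenvalue_abs_sub_mul_sqrt_le u α
  have hu_pos : 0 < √(u ⬝ᵥ u) := Real.sqrt_pos.2 <|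
    (by simpa using dotProduct_self_star_nonneg u : 0 ≤ u ⬝ᵥ u).lt_of_ne'
      (dotProduct_self_eq_zero.not.mpr hu)
  have hbound : |lam - α| ≤ √(μ * (1 + α ^ 2)) / √(u ⬝ᵥ u) :=
    (le_div_iff₀ hu_pos).2 (hres ▸ hle)
  refine ⟨hres, lam, hlam, hbound, chordal_le_of_abs_sub_le ?_⟩
  rwa [← Real.sqrt_mul' μ (by positivity)]
end

section
/- Let A be an n×n real symmetric matrix, λ ≠ 0 an eigenvalue of A with unit eigenvector x (Ax = λx, ‖x‖ = 1), and ẽ ∈ ℝⁿ a unit vector orthogonal to x. Then the harmonic Rayleigh quotient θ̃(x + εẽ) = ((x + εẽ)ᵀA²(x + εẽ))/((x + εẽ)ᵀA(x + εẽ)) is defined for all sufficiently small ε > 0 and satisfies θ̃(x + εẽ) − λ − ε² · ẽᵀ(λ⁻¹A² − A)ẽ = O(ε⁴) as ε → 0⁺; that is, there exist constants C, δ > 0 such that |θ̃(x + εẽ) − λ − ε² ẽᵀ(λ⁻¹A² − A)ẽ| ≤ Cε⁴ for all 0 < ε < δ. -/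
/-!
Writing `u = x + ε ẽ`, the cross terms of both quadratic forms vanish because `x` is an
eigenvector of the symmetric matrices `A` and `A²` and `ẽ ⊥ x`, so
`θ̃(u) = (λ² + ε² q) / (λ + ε² p)` with `p = ẽᵀAẽ`, `q = ẽᵀA²ẽ`. Subtracting the claimed
second-order expansion leaves `-ε⁴ (λ⁻¹q - p) p / (λ + ε² p)`, and the last factor is
continuous at `ε = 0` because `λ ≠ 0`, hence bounded near `0`.
-/

open Matrix

namespace Matrix

variable {ι R : Type*} [Fintype ι] [CommRing R]

theorem IsSymm.dotProduct_mulVec_add_smul {B : Matrix ι ι R} (hB : B.IsSymm) {x e : ι → R}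
    {μ : R} (hx : B *ᵥ x = μ • x) (he : e ⬝ᵥ x = 0) (ε : R) :
    (x + ε • e) ⬝ᵥ B *ᵥ (x + ε • e) = μ * (x ⬝ᵥ x) + ε ^ 2 * (e ⬝ᵥ B *ᵥ e) := by
  have hxBe : x ⬝ᵥ B *ᵥ e = 0 := by
    rw [dotProduct_mulVec, ← mulVec_transpose, hB.eq, hx, smul_dotProduct, dotProduct_comm, he,
      smul_zero]
  simp only [mulVec_add, mulVec_smul, dotProduct_add, add_dotProduct, smul_dotProduct,
    dotProduct_smul, hx, he, hxBe, smul_eq_mul]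
  ring

end Matrix

theorem div_sub_second_order_eq {lam t p q : ℝ} (hlam : lam ≠ 0) (hD : lam + t * p ≠ 0) :
    (lam ^ 2 + t * q) / (lam + t * p) - lam - t * (lam⁻¹ * q - p) =
      -(t ^ 2 * ((lam⁻¹ * q - p) * p / (lam + t * p))) := by
  field_simp
  ring

theorem exists_bound_div_sub_second_order {lam : ℝ} (hlam : lam ≠ 0) (p q : ℝ) :
    ∃ C δ : ℝ, 0 < C ∧ 0 < δ ∧ ∀ ε : ℝ, |ε| < δ →
      lam + ε ^ 2 * p ≠ 0 ∧
      |(lam ^ 2 + ε ^ 2 * q) / (lam + ε ^ 2 * p) - lam - ε ^ 2 * (lam⁻¹ * q - p)| ≤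
        C * ε ^ 4 := by
  set g : ℝ → ℝ := fun ε ↦ (lam⁻¹ * q - p) * p / (lam + ε ^ 2 * p)
  have hD : Continuous fun ε : ℝ ↦ lam + ε ^ 2 * p := by fun_prop
  have hD0 : ∀ᶠ ε in nhds 0, lam + ε ^ 2 * p ≠ 0 :=
    hD.continuousAt.eventually_ne (by simpa using hlam)
  have hg : ∀ᶠ ε in nhds 0, |g ε| < |g 0| + 1 := by
    have hgc : ContinuousAt (fun ε ↦ |g ε|) 0 :=
      (continuousAt_const.div hD.continuousAt (by simpa using hlam)).abs
    exact hgc.eventually_lt continuousAt_const (lt_add_one _)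
  obtain ⟨δ, hδ, hball⟩ := Metric.eventually_nhds_iff.mp (hD0.and hg)
  refine ⟨|g 0| + 1, δ, by positivity, hδ, fun ε hε ↦ ?_⟩
  obtain ⟨hne, hgε⟩ := hball (by simpa using hε)
  refine ⟨hne, ?_⟩
  have hε4 : 0 ≤ ε ^ 4 := by positivity
  rw [div_sub_second_order_eq hlam hne, abs_neg, abs_mul, ← pow_mul, abs_of_nonneg hε4, mul_comm]
  exact mul_le_mul_of_nonneg_right hgε.le hε4

theorem harmonic_rq_second_order_expansion_general
    {n : ℕ} (A : Matrix (Fin n) (Fin n) ℝ) (hA : A.IsSymm)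
    (lam : ℝ) (hlam : lam ≠ 0)
    (x : Fin n → ℝ) (hx : A.mulVec x = lam • x) (hxnorm : x ⬝ᵥ x = 1)
    (et : Fin n → ℝ) (horth : et ⬝ᵥ x = 0) :
    ∃ C δ : ℝ, 0 < C ∧ 0 < δ ∧ ∀ ε : ℝ, 0 < ε → ε < δ →
      (x + ε • et) ⬝ᵥ A.mulVec (x + ε • et) ≠ 0 ∧
      |((x + ε • et) ⬝ᵥ (A * A).mulVec (x + ε • et)) /
          ((x + ε • et) ⬝ᵥ A.mulVec (x + ε • et)) -
        lam - ε^2 * (et ⬝ᵥ (lam⁻¹ • (A * A) - A).mulVec et)| ≤ C * ε^4 := by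
  have hA2 : (A * A).IsSymm := by simpa [sq] using hA.pow 2
  have hA2x : (A * A) *ᵥ x = lam ^ 2 • x := by
    rw [← mulVec_mulVec, hx, mulVec_smul, hx, smul_smul, sq]
  obtain ⟨C, δ, hC, hδ, hbound⟩ :=
    exists_bound_div_sub_second_order hlam (et ⬝ᵥ A *ᵥ et) (et ⬝ᵥ (A * A) *ᵥ et)
  refine ⟨C, δ, hC, hδ, fun ε hε hεδ ↦ ?_⟩
  rw [hA.dotProduct_mulVec_add_smul hx horth, hA2.dotProduct_mulVec_add_smul hA2x horth, hxnorm,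
    sub_mulVec, smul_mulVec, dotProduct_sub, dotProduct_smul, smul_eq_mul, mul_one, mul_one]
  exact hbound ε (by rwa [abs_of_pos hε])

/-- For an eigenpair `(λ, x)` of the symmetric matrix `A` with `λ ≠ 0`, `‖x‖ = 1`,
and a unit vector `ẽ ⊥ x`, the harmonic Rayleigh quotient
`θ̃(x + εẽ) = ((x+εẽ)ᵀA²(x+εẽ))/((x+εẽ)ᵀA(x+εẽ))` is defined for all sufficiently small
`ε > 0` and `θ̃(x + εẽ) − λ − ε²·ẽᵀ(λ⁻¹A² − A)ẽ = O(ε⁴)` as `ε → 0⁺`. -/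
theorem harmonic_rq_second_order_expansion
    {n : ℕ} (A : Matrix (Fin n) (Fin n) ℝ) (hA : A.IsSymm)
    (lam : ℝ) (hlam : lam ≠ 0)
    (x : Fin n → ℝ) (hx : A.mulVec x = lam • x) (hxnorm : x ⬝ᵥ x = 1)
    (et : Fin n → ℝ) (hetnorm : et ⬝ᵥ et = 1) (horth : et ⬝ᵥ x = 0) :
    ∃ C δ : ℝ, 0 < C ∧ 0 < δ ∧ ∀ ε : ℝ, 0 < ε → ε < δ →
      (x + ε • et) ⬝ᵥ A.mulVec (x + ε • et) ≠ 0 ∧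
      |((x + ε • et) ⬝ᵥ (A * A).mulVec (x + ε • et)) /
          ((x + ε • et) ⬝ᵥ A.mulVec (x + ε • et)) -
        lam - ε^2 * (et ⬝ᵥ (lam⁻¹ • (A * A) - A).mulVec et)| ≤ C * ε^4 :=
  harmonic_rq_second_order_expansion_general A hA lam hlam x hx hxnorm et horth
end

section
/- Let A be an n×n real symmetric matrix, λ an eigenvalue of A with unit eigenvector x (Ax = λx, ‖x‖ = 1), τ ∈ ℝ with τ ≠ λ, and ẽ ∈ ℝⁿ a unit vector orthogonal to x. Then the harmonic Rayleigh quotient with target τ, θ̃_τ(x + εẽ) = ((x + εẽ)ᵀ(A − τI)A(x + εẽ))/((x + εẽ)ᵀ(A − τI)(x + εẽ)), is defined for all sufficiently small ε > 0 and satisfies θ̃_τ(x + εẽ) − λ − ε² · (λ − τ)⁻¹ · ẽᵀ(A − τI)(A − λI)ẽ = O(ε⁴) as ε → 0⁺. -/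
open Matrix

lemma scalar_aux_hrq (lam d b c : ℝ) (hd : d ≠ 0) :
    ∃ C δ : ℝ, 0 < C ∧ 0 < δ ∧ ∀ ε : ℝ, 0 < ε → ε < δ →
      d + ε ^ 2 * b ≠ 0 ∧
      |(lam * d + ε ^ 2 * c) / (d + ε ^ 2 * b) - lam - ε ^ 2 * (d⁻¹ * (c - lam * b))|
        ≤ C * ε ^ 4 := by
  have hdpos : 0 < |d| := abs_pos.mpr hd
  set m := c - lam * b with hmdef
  refine ⟨2 * (|m| * |b| + 1) / d ^ 2, min 1 (|d| / (2 * (|b| + 1))), by positivity,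
    lt_min one_pos (by positivity), ?_⟩
  intro ε hε hεδ
  have hε1 : ε < 1 := lt_of_lt_of_le hεδ (min_le_left _ _)
  have hε2 : ε < |d| / (2 * (|b| + 1)) := lt_of_lt_of_le hεδ (min_le_right _ _)
  have hεsq : ε ^ 2 ≤ ε := by nlinarith
  have hbound : ε ^ 2 * |b| < |d| / 2 := by
    have h1 : ε ^ 2 * |b| ≤ ε * (|b| + 1) := by nlinarith [abs_nonneg b]
    have h2 : ε * (|b| + 1) < |d| / 2 := by
      rw [lt_div_iff₀ (by positivity : (0:ℝ) < 2 * (|b| + 1))] at hε2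
      nlinarith [abs_nonneg b]
    linarith
  have hDlb : |d| / 2 ≤ |d + ε ^ 2 * b| := by
    have h := abs_sub_abs_le_abs_sub d (-(ε ^ 2 * b))
    have habs : |ε ^ 2 * b| = ε ^ 2 * |b| := by
      rw [abs_mul, abs_of_nonneg (sq_nonneg ε)]
    rw [abs_neg, sub_neg_eq_add, habs] at h
    linarith
  have hDne : d + ε ^ 2 * b ≠ 0 := by
    intro h
    rw [h, abs_zero] at hDlb
    linarith
  refine ⟨hDne, ?_⟩
  have heq : (lam * d + ε ^ 2 * c) / (d + ε ^ 2 * b) - lam - ε ^ 2 * (d⁻¹ * (c - lam * b))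
      = -(ε ^ 4 * m * b) / ((d + ε ^ 2 * b) * d) := by
    rw [hmdef]
    field_simp
    ring
  rw [heq, abs_div, abs_neg]
  rw [div_le_iff₀ (by positivity)]
  have h1 : |ε ^ 4 * m * b| = ε ^ 4 * (|m| * |b|) := by
    rw [abs_mul, abs_mul, abs_of_nonneg (by positivity : (0:ℝ) ≤ ε ^ 4)]
    ring
  rw [h1]
  have h2 : (|d| / 2) * |d| ≤ |(d + ε ^ 2 * b) * d| := by
    rw [abs_mul]
    exact mul_le_mul_of_nonneg_right hDlb (abs_nonneg d)
  have hdd : |d| * |d| = d ^ 2 := by rw [← abs_mul, sq, abs_mul_self]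
  have h3 : ε ^ 4 * (|m| * |b|) ≤ 2 * (|m| * |b| + 1) / d ^ 2 * ε ^ 4 * ((|d| / 2) * |d|) := by
    rw [div_mul_eq_mul_div, div_mul_eq_mul_div, le_div_iff₀ (by positivity)]
    have h4 : |d| / 2 * |d| = d ^ 2 / 2 := by rw [div_mul_eq_mul_div, hdd]
    rw [h4]
    nlinarith [abs_nonneg m, abs_nonneg b, pow_pos hε 4, hdd,
      mul_nonneg (pow_pos hε 4).le (sq_nonneg d),
      mul_nonneg (mul_nonneg (abs_nonneg m) (abs_nonneg b)) (mul_nonneg (pow_pos hε 4).le (sq_nonneg d))]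
  calc ε ^ 4 * (|m| * |b|) ≤ 2 * (|m| * |b| + 1) / d ^ 2 * ε ^ 4 * ((|d| / 2) * |d|) := h3
    _ ≤ 2 * (|m| * |b| + 1) / d ^ 2 * ε ^ 4 * |(d + ε ^ 2 * b) * d| :=
        mul_le_mul_of_nonneg_left h2 (by positivity)

/-- For an eigenpair `(λ, x)` of the symmetric matrix `A` with `‖x‖ = 1`, a target
`τ ≠ λ`, and a unit vector `ẽ ⊥ x`, the harmonic Rayleigh quotient with target `τ` at `x + εẽ`
is defined for all sufficiently small `ε > 0` and satisfies
`θ̃_τ(x + εẽ) − λ − ε²·(λ−τ)⁻¹·ẽᵀ(A − τI)(A − λI)ẽ = O(ε⁴)` as `ε → 0⁺`. -/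
theorem harmonic_rq_target_second_order_expansion
    {n : ℕ} (A : Matrix (Fin n) (Fin n) ℝ) (hA : A.IsSymm)
    (lam τ : ℝ) (hτ : τ ≠ lam)
    (x : Fin n → ℝ) (hx : A.mulVec x = lam • x) (hxnorm : x ⬝ᵥ x = 1)
    (et : Fin n → ℝ) (hetnorm : et ⬝ᵥ et = 1) (horth : et ⬝ᵥ x = 0) :
    ∃ C δ : ℝ, 0 < C ∧ 0 < δ ∧ ∀ ε : ℝ, 0 < ε → ε < δ →
      (x + ε • et) ⬝ᵥ (A - τ • (1 : Matrix (Fin n) (Fin n) ℝ)).mulVec (x + ε • et) ≠ 0 ∧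
      |((x + ε • et) ⬝ᵥ ((A - τ • (1 : Matrix (Fin n) (Fin n) ℝ)) * A).mulVec (x + ε • et)) /
          ((x + ε • et) ⬝ᵥ (A - τ • (1 : Matrix (Fin n) (Fin n) ℝ)).mulVec (x + ε • et)) -
        lam - ε^2 * ((lam - τ)⁻¹ *
          (et ⬝ᵥ ((A - τ • (1 : Matrix (Fin n) (Fin n) ℝ)) *
            (A - lam • (1 : Matrix (Fin n) (Fin n) ℝ))).mulVec et))| ≤ C * ε^4 := by
  set B := A - τ • (1 : Matrix (Fin n) (Fin n) ℝ) with hBdef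
  have hd : lam - τ ≠ 0 := sub_ne_zero.mpr (Ne.symm hτ)
  have hBsymm : Bᵀ = B := by
    simp [hBdef, transpose_sub, transpose_smul, hA.eq]
  have key : ∀ M : Matrix (Fin n) (Fin n) ℝ, Mᵀ = M →
      ∀ v w : Fin n → ℝ, v ⬝ᵥ M.mulVec w = (M.mulVec v) ⬝ᵥ w := by
    intro M hM v w
    rw [dotProduct_mulVec]
    congr 1
    conv_lhs => rw [← hM]
    rw [vecMul_transpose]
  have hBx : B.mulVec x = (lam - τ) • x := by
    simp [hBdef, sub_mulVec, hx, sub_smul, smul_mulVec, one_mulVec]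
  have hBAx : (B * A).mulVec x = (lam * (lam - τ)) • x := by
    rw [← mulVec_mulVec, hx, mulVec_smul, hBx, smul_smul]
  have hBAsymm : (B * A)ᵀ = B * A := by
    rw [transpose_mul, hA.eq, hBsymm, hBdef]
    simp [Matrix.mul_sub, Matrix.sub_mul, Matrix.mul_smul, Matrix.smul_mul]
  have hxet : x ⬝ᵥ et = 0 := by rw [dotProduct_comm]; exact horth
  have expand : ∀ (M : Matrix (Fin n) (Fin n) ℝ) (ε : ℝ),
      (x + ε • et) ⬝ᵥ M.mulVec (x + ε • et) =
        x ⬝ᵥ M.mulVec x + ε * (x ⬝ᵥ M.mulVec et) + ε * (et ⬝ᵥ M.mulVec x)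
          + ε ^ 2 * (et ⬝ᵥ M.mulVec et) := by
    intro M ε
    simp only [mulVec_add, mulVec_smul, dotProduct_add, add_dotProduct, dotProduct_smul,
      smul_dotProduct, smul_eq_mul]
    ring
  have hD : ∀ ε : ℝ, (x + ε • et) ⬝ᵥ B.mulVec (x + ε • et)
      = (lam - τ) + ε ^ 2 * (et ⬝ᵥ B.mulVec et) := by
    intro ε
    rw [expand, key B hBsymm x et, hBx]
    simp [hxnorm, hxet, horth]
  have hN : ∀ ε : ℝ, (x + ε • et) ⬝ᵥ (B * A).mulVec (x + ε • et)
      = lam * (lam - τ) + ε ^ 2 * (et ⬝ᵥ (B * A).mulVec et) := by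
    intro ε
    rw [expand, key (B * A) hBAsymm x et, hBAx]
    simp [hxnorm, hxet, horth]
  have hm : et ⬝ᵥ (B * (A - lam • (1 : Matrix (Fin n) (Fin n) ℝ))).mulVec et
      = (et ⬝ᵥ (B * A).mulVec et) - lam * (et ⬝ᵥ B.mulVec et) := by
    rw [Matrix.mul_sub, Matrix.mul_smul, Matrix.mul_one, sub_mulVec, dotProduct_sub,
      smul_mulVec, dotProduct_smul, smul_eq_mul]
  obtain ⟨C, δ, hC, hδ, h⟩ := scalar_aux_hrq lam (lam - τ) (et ⬝ᵥ B.mulVec et)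
    (et ⬝ᵥ (B * A).mulVec et) hd
  refine ⟨C, δ, hC, hδ, ?_⟩
  intro ε hε hεδ
  obtain ⟨h1, h2⟩ := h ε hε hεδ
  rw [hD, hN, hm]
  exact ⟨h1, h2⟩
end

section
/- Let A be an n×n real symmetric matrix, λ ≠ 0 an eigenvalue of A with unit eigenvector x (Ax = λx, ‖x‖ = 1), and ẽ ∈ ℝⁿ a unit vector orthogonal to x. For a vector u with uᵀAu ≠ 0, let α(u) = [uᵀA²u − uᵀu + √((uᵀA²u − uᵀu)² + 4(uᵀAu)²)]/(2uᵀAu). Then α(x + εẽ) is defined for all sufficiently small ε > 0 and satisfies α(x + εẽ) − λ − ε² · (λ/(λ² + 1)) · ẽᵀ(A + λ⁻¹I)(A − λI)ẽ = O(ε⁴) as ε → 0⁺. -/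
/-!
Since `x ⊥ ẽ` and `A` is symmetric, the three quadratic forms at `u = x + εẽ` are
`uᵀAu = λ + ε²q`, `uᵀA²u = λ² + ε²r` and `uᵀu = 1 + ε²` with `q = ẽᵀAẽ`, `r = ẽᵀA²ẽ`, so the
claim is about one real function of `ε`. Now `α(u)` is a root of `a t² - s t - a`
(`a = uᵀAu`, `s = uᵀA²u - uᵀu`), and rationalizing the square root gives
`α(u) - μ = -2 (a μ² - s μ - a) / (√(s² + 4a²) + 2aμ - s)` for any `μ`. For `μ = λ + ε²T` with
the paper's `T` the numerator is `O(ε⁴)`, while the denominator tends to `2(λ² + 1) ≠ 0`.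
-/

open Matrix Filter Topology Asymptotics

lemma add_smul_dotProduct_mulVec_add_smul {m R : Type*} [Fintype m] [CommRing R]
    {B : Matrix m m R} (hB : B.IsSymm) {μ : R} {x e : m → R} (hx : B *ᵥ x = μ • x)
    (he : e ⬝ᵥ x = 0) (ε : R) :
    (x + ε • e) ⬝ᵥ B *ᵥ (x + ε • e) = μ * (x ⬝ᵥ x) + ε ^ 2 * (e ⬝ᵥ B *ᵥ e) := by
  have hx' : x ᵥ* B = μ • x := by rw [← mulVec_transpose, hB.eq, hx]
  have hxe : x ⬝ᵥ e = 0 := by rw [dotProduct_comm, he]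
  simp only [mulVec_add, mulVec_smul, hx, dotProduct_add, add_dotProduct, dotProduct_smul,
    smul_dotProduct, dotProduct_mulVec x, hx', he, hxe, smul_eq_mul]
  ring

/-- The homogeneous Rayleigh quotient `α(u)` as a function of `a = uᵀAu`, `b = uᵀA²u`, `c = uᵀu`. -/
noncomputable def homRQ (a b c : ℝ) : ℝ := (b - c + √((b - c) ^ 2 + 4 * a ^ 2)) / (2 * a)

lemma homRQ_sub_eq {a b c μ : ℝ} (ha : a ≠ 0)
    (hden : √((b - c) ^ 2 + 4 * a ^ 2) + 2 * a * μ - (b - c) ≠ 0) :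
    homRQ a b c - μ =
      -2 * (a * μ ^ 2 - (b - c) * μ - a) / (√((b - c) ^ 2 + 4 * a ^ 2) + 2 * a * μ - (b - c)) := by
  have hsqrt := Real.sq_sqrt (by positivity : 0 ≤ (b - c) ^ 2 + 4 * a ^ 2)
  rw [homRQ, eq_div_iff hden]
  field_simp
  linear_combination hsqrt

theorem homRQ_isBigO {lam q r T : ℝ} (hlam : lam ≠ 0)
    (hT : (lam ^ 2 + 1) * T = lam * (r - 1) + (1 - lam ^ 2) * q) :
    (fun ε : ℝ => homRQ (lam + ε ^ 2 * q) (lam ^ 2 + ε ^ 2 * r) (1 + ε ^ 2) - lam - ε ^ 2 * T)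
      =O[𝓝 0] fun ε => ε ^ 4 := by
  set a : ℝ → ℝ := fun ε => lam + ε ^ 2 * q
  set s : ℝ → ℝ := fun ε => lam ^ 2 + ε ^ 2 * r - (1 + ε ^ 2)
  set μ : ℝ → ℝ := fun ε => lam + ε ^ 2 * T
  set den : ℝ → ℝ := fun ε => √(s ε ^ 2 + 4 * a ε ^ 2) + 2 * a ε * μ ε - s ε
  set k : ℝ → ℝ := fun ε => T * (2 * lam * q + lam * T - (r - 1) + ε ^ 2 * q * T)
  -- the `ε²` coefficient of `a μ² - s μ - a` is a multiple of `hT`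
  have hroot : ∀ ε, a ε * μ ε ^ 2 - s ε * μ ε - a ε = ε ^ 4 * k ε := by
    intro ε
    linear_combination ε ^ 2 * hT
  have hden_cont : Continuous den := by fun_prop
  have hden_zero : den 0 = 2 * (lam ^ 2 + 1) := by
    have hsq : (lam ^ 2 - 1) ^ 2 + 4 * lam ^ 2 = (lam ^ 2 + 1) ^ 2 := by ring
    norm_num [den, a, s, μ, hsq, Real.sqrt_sq (by positivity : (0 : ℝ) ≤ lam ^ 2 + 1)]
    ring
  have hden_ne : den 0 ≠ 0 := by rw [hden_zero]; positivity
  have ha : ∀ᶠ ε in 𝓝 0, a ε ≠ 0 :=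
    (by fun_prop : Continuous a).continuousAt.eventually_ne (by simpa [a] using hlam)
  have hden : ∀ᶠ ε in 𝓝 0, den ε ≠ 0 := hden_cont.continuousAt.eventually_ne hden_ne
  have hquot : Tendsto (fun ε => -2 * k ε / den ε) (𝓝 0) (𝓝 (-2 * k 0 / den 0)) :=
    ((by fun_prop : Continuous fun ε => -2 * k ε).continuousAt.div hden_cont.continuousAt hden_ne)
  have hexp : (fun ε => homRQ (a ε) (lam ^ 2 + ε ^ 2 * r) (1 + ε ^ 2) - lam - ε ^ 2 * T)
      =ᶠ[𝓝 0] fun ε => ε ^ 4 * (-2 * k ε / den ε) := by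
    filter_upwards [ha, hden] with ε haε hdenε
    rw [sub_sub, homRQ_sub_eq haε hdenε, hroot]
    ring
  refine IsBigO.congr' ?_ hexp.symm EventuallyEq.rfl
  simpa using (isBigO_refl (fun ε : ℝ => ε ^ 4) _).mul (hquot.isBigO_one ℝ)

/-- For an eigenpair `(λ, x)` of the symmetric matrix `A` with `λ ≠ 0`, `‖x‖ = 1`,
and a unit vector `ẽ ⊥ x`, the homogeneous Rayleigh quotient
`α(u) = [uᵀA²u − uᵀu + √((uᵀA²u − uᵀu)² + 4(uᵀAu)²)]/(2uᵀAu)` at `u = x + εẽ` is defined for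
all sufficiently small `ε > 0` and satisfies
`α(x + εẽ) − λ − ε²·(λ/(λ²+1))·ẽᵀ(A + λ⁻¹I)(A − λI)ẽ = O(ε⁴)` as `ε → 0⁺`. -/
theorem homogeneous_rq_second_order_expansion
    {n : ℕ} (A : Matrix (Fin n) (Fin n) ℝ) (hA : A.IsSymm)
    (lam : ℝ) (hlam : lam ≠ 0)
    (x : Fin n → ℝ) (hx : A.mulVec x = lam • x) (hxnorm : x ⬝ᵥ x = 1)
    (et : Fin n → ℝ) (hetnorm : et ⬝ᵥ et = 1) (horth : et ⬝ᵥ x = 0) :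
    ∃ C δ : ℝ, 0 < C ∧ 0 < δ ∧ ∀ ε : ℝ, 0 < ε → ε < δ →
      (x + ε • et) ⬝ᵥ A.mulVec (x + ε • et) ≠ 0 ∧
      |((x + ε • et) ⬝ᵥ (A * A).mulVec (x + ε • et) - (x + ε • et) ⬝ᵥ (x + ε • et) +
          Real.sqrt (((x + ε • et) ⬝ᵥ (A * A).mulVec (x + ε • et) -
              (x + ε • et) ⬝ᵥ (x + ε • et))^2 +
            4 * ((x + ε • et) ⬝ᵥ A.mulVec (x + ε • et))^2)) /
          (2 * ((x + ε • et) ⬝ᵥ A.mulVec (x + ε • et))) -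
        lam - ε^2 * ((lam / (lam^2 + 1)) *
          (et ⬝ᵥ ((A + lam⁻¹ • (1 : Matrix (Fin n) (Fin n) ℝ)) *
            (A - lam • (1 : Matrix (Fin n) (Fin n) ℝ))).mulVec et))| ≤ C * ε^4 := by
  set q := et ⬝ᵥ A *ᵥ et
  set r := et ⬝ᵥ (A * A) *ᵥ et
  have hAA : (A * A) *ᵥ x = lam ^ 2 • x := by
    rw [← mulVec_mulVec, hx, mulVec_smul, hx, smul_smul, sq]
  have hA_form (ε : ℝ) : (x + ε • et) ⬝ᵥ A *ᵥ (x + ε • et) = lam + ε ^ 2 * q := by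
    simpa [hxnorm] using add_smul_dotProduct_mulVec_add_smul hA hx horth ε
  have hAA_form (ε : ℝ) : (x + ε • et) ⬝ᵥ (A * A) *ᵥ (x + ε • et) = lam ^ 2 + ε ^ 2 * r := by
    simpa [hxnorm] using
      add_smul_dotProduct_mulVec_add_smul (by simpa only [sq] using hA.pow 2) hAA horth ε
  have hnorm (ε : ℝ) : (x + ε • et) ⬝ᵥ (x + ε • et) = 1 + ε ^ 2 := by
    simpa [hxnorm, hetnorm] using
      add_smul_dotProduct_mulVec_add_smul isSymm_one (by simp) horth ε
  have hT : et ⬝ᵥ ((A + lam⁻¹ • 1) * (A - lam • 1)) *ᵥ et = r + (lam⁻¹ - lam) * q - 1 := by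
    simp only [← mulVec_mulVec, add_mulVec, sub_mulVec, mulVec_sub, smul_mulVec, mulVec_smul,
      one_mulVec, dotProduct_add, dotProduct_sub, dotProduct_smul, smul_eq_mul, hetnorm, q, r]
    field_simp
    ring
  obtain ⟨C, hC, hbigO⟩ := (homRQ_isBigO (q := q) (r := r) hlam
    (T := lam / (lam ^ 2 + 1) * (r + (lam⁻¹ - lam) * q - 1)) (by field_simp; ring)).exists_pos
  have ha : ∀ᶠ ε in 𝓝 0, lam + ε ^ 2 * q ≠ 0 :=
    (by fun_prop : Continuous fun ε : ℝ => lam + ε ^ 2 * q).continuousAt.eventually_ne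
      (by simpa using hlam)
  obtain ⟨δ, hδ, hsmall⟩ := Metric.eventually_nhds_iff.1 (ha.and hbigO.bound)
  refine ⟨C, δ, hC, hδ, fun ε hε hεδ => ?_⟩
  obtain ⟨hane, hbound⟩ := hsmall (show dist ε 0 < δ by simpa [Real.dist_eq, abs_of_pos hε])
  rw [hA_form, hAA_form, hnorm, hT]
  exact ⟨hane, by simpa only [homRQ, Real.norm_eq_abs, abs_pow, abs_of_pos hε] using hbound⟩
end

section
/- Let A be an n×n real symmetric matrix, B an n×n real symmetric positive definite matrix, and u ∈ ℝⁿ a nonzero vector with uᵀABu ≠ 0. Let μ = (1/2)[uᵀA²u + uᵀB²u − √((uᵀA²u − uᵀB²u)² + 4(uᵀABu)²)]. Then μ = 0 if and only if u is a generalized eigenvector, i.e., there exists λ ∈ ℝ with Au = λBu. Moreover, if Au = λBu for some λ ∈ ℝ, then the generalized homogeneous Rayleigh quotient α = [uᵀA²u − uᵀB²u + √((uᵀA²u − uᵀB²u)² + 4(uᵀABu)²)]/(2uᵀABu) equals λ. -/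
open Matrix

set_option maxHeartbeats 1000000

/-- For symmetric `A`, SPD `B`, nonzero `u` with `uᵀABu ≠ 0`, and
`μ = (1/2)[uᵀA²u + uᵀB²u − √((uᵀA²u − uᵀB²u)² + 4(uᵀABu)²)]`: `μ = 0` iff `u` is a
generalized eigenvector (`Au = λBu` for some real `λ`); and if `Au = λBu` then the
generalized homogeneous Rayleigh quotient `α` equals `λ`. -/
theorem gen_homogeneous_rq_exact_on_eigenvectors
    {n : ℕ} (A B : Matrix (Fin n) (Fin n) ℝ) (hA : A.IsSymm) (hB : B.PosDef)
    (u : Fin n → ℝ) (hu : u ≠ 0) (huABu : u ⬝ᵥ (A * B).mulVec u ≠ 0)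
    (μ : ℝ)
    (hμ : μ = (1/2) * (u ⬝ᵥ (A * A).mulVec u + u ⬝ᵥ (B * B).mulVec u -
      Real.sqrt ((u ⬝ᵥ (A * A).mulVec u - u ⬝ᵥ (B * B).mulVec u)^2 +
        4 * (u ⬝ᵥ (A * B).mulVec u)^2)))
    (α : ℝ)
    (hα : α = (u ⬝ᵥ (A * A).mulVec u - u ⬝ᵥ (B * B).mulVec u +
      Real.sqrt ((u ⬝ᵥ (A * A).mulVec u - u ⬝ᵥ (B * B).mulVec u)^2 +
        4 * (u ⬝ᵥ (A * B).mulVec u)^2)) / (2 * (u ⬝ᵥ (A * B).mulVec u))) :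
    (μ = 0 ↔ ∃ lam : ℝ, A.mulVec u = lam • B.mulVec u) ∧
    (∀ lam : ℝ, A.mulVec u = lam • B.mulVec u → α = lam) := by
  set v : Fin n → ℝ := A.mulVec u with hv
  set w : Fin n → ℝ := B.mulVec u with hw
  have key : ∀ M N : Matrix (Fin n) (Fin n) ℝ, Mᵀ = M →
      u ⬝ᵥ (M * N).mulVec u = M.mulVec u ⬝ᵥ N.mulVec u := by
    intro M N hM
    rw [← Matrix.mulVec_mulVec, Matrix.dotProduct_mulVec, ← Matrix.mulVec_transpose, hM]
  have hBsymm : Bᵀ = B := by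
    have h := hB.1
    rw [Matrix.IsHermitian] at h
    simpa using h
  have dpnn : ∀ x : Fin n → ℝ, 0 ≤ x ⬝ᵥ x := fun x =>
    Finset.sum_nonneg fun i _ => mul_self_nonneg _
  have hAA : u ⬝ᵥ (A * A).mulVec u = v ⬝ᵥ v := key A A hA
  have hBB : u ⬝ᵥ (B * B).mulVec u = w ⬝ᵥ w := key B B hBsymm
  have hAB : u ⬝ᵥ (A * B).mulVec u = v ⬝ᵥ w := key A B hA
  rw [hAA, hBB, hAB] at hμ hα
  rw [hAB] at huABu
  set a : ℝ := v ⬝ᵥ v with ha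
  set b : ℝ := w ⬝ᵥ w with hb
  set c : ℝ := v ⬝ᵥ w with hc
  -- w ≠ 0 since c ≠ 0
  have hw0 : w ≠ 0 := by
    intro h
    apply huABu
    rw [hc, h, dotProduct_zero]
  have hbpos : 0 < b := by
    rcases lt_or_eq_of_le (dpnn w) with h | h
    · exact h
    · exact absurd ((dotProduct_self_eq_zero).mp h.symm) hw0
  have hanonneg : 0 ≤ a := dpnn v
  -- Cauchy-Schwarz: c^2 ≤ a * b, from (b•v - c•w)⬝(b•v - c•w) ≥ 0
  have expand : ∀ (s t : ℝ), (s • v - t • w) ⬝ᵥ (s • v - t • w)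
      = s^2 * a - 2 * s * t * c + t^2 * b := by
    intro s t
    have hcomm : w ⬝ᵥ v = c := by rw [hc, dotProduct_comm]
    simp only [sub_dotProduct, dotProduct_sub, smul_dotProduct,
      dotProduct_smul, smul_eq_mul, ← ha, ← hb, ← hc, hcomm]
    ring
  have hCS : c^2 ≤ a * b := by
    have h := dpnn (b • v - c • w)
    rw [expand b c] at h
    nlinarith [hbpos]
  have hsqrt : Real.sqrt ((a - b)^2 + 4 * c^2) ≤ a + b := by
    rw [show a + b = Real.sqrt ((a+b)^2) by rw [Real.sqrt_sq (by linarith)]]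
    apply Real.sqrt_le_sqrt
    nlinarith
  have hsqnn : (0:ℝ) ≤ (a - b)^2 + 4 * c^2 := by positivity
  constructor
  · constructor
    · -- μ = 0 → eigenvector
      intro hμ0
      have hs : Real.sqrt ((a - b)^2 + 4 * c^2) = a + b := by
        rw [hμ] at hμ0; linarith
      have hsq : (a - b)^2 + 4 * c^2 = (a + b)^2 := by
        have := Real.sq_sqrt hsqnn
        rw [hs] at this
        linarith [this]
      have habc : a * b = c^2 := by nlinarith
      refine ⟨c / b, ?_⟩
      have hz : (v - (c/b) • w) ⬝ᵥ (v - (c/b) • w) = 0 := by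
        have h1 := expand 1 (c/b)
        simp only [one_smul] at h1
        rw [h1]
        field_simp
        nlinarith [habc, hbpos]
      have := (dotProduct_self_eq_zero).mp hz
      have : v = (c/b) • w := by
        have h := sub_eq_zero.mp this
        exact h
      exact this
    · -- eigenvector → μ = 0
      rintro ⟨lam, hlam⟩
      have hveq : v = lam • w := hlam
      have haval : a = lam^2 * b := by
        rw [ha, hveq]
        simp [smul_dotProduct, dotProduct_smul, ← hb]
        ring
      have hcval : c = lam * b := by
        rw [hc, hveq]
        simp [smul_dotProduct, ← hb]
      have hs : Real.sqrt ((a - b)^2 + 4 * c^2) = (lam^2 + 1) * b := by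
        rw [haval, hcval]
        rw [show (lam^2 * b - b)^2 + 4 * (lam * b)^2 = ((lam^2 + 1) * b)^2 by ring]
        exact Real.sqrt_sq (by nlinarith)
      rw [hμ, hs, haval]
      ring
  · -- if Au = lam • Bu then α = lam
    intro lam hlam
    have hveq : v = lam • w := hlam
    have haval : a = lam^2 * b := by
      rw [ha, hveq]
      simp [smul_dotProduct, dotProduct_smul, ← hb]
      ring
    have hcval : c = lam * b := by
      rw [hc, hveq]
      simp [smul_dotProduct, ← hb]
    have hlam0 : lam ≠ 0 := by
      intro h
      apply huABu
      rw [hcval, h, zero_mul]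
    have hs : Real.sqrt ((a - b)^2 + 4 * c^2) = (lam^2 + 1) * b := by
      rw [haval, hcval]
      rw [show (lam^2 * b - b)^2 + 4 * (lam * b)^2 = ((lam^2 + 1) * b)^2 by ring]
      exact Real.sqrt_sq (by nlinarith)
    rw [hα, hs, haval, hcval]
    field_simp
    ring
end

section
/- Let A be an n×n real symmetric matrix, B an n×n real symmetric positive definite matrix with smallest eigenvalue λ₁(B) > 0, and u ∈ ℝⁿ a nonzero vector. Then for every α ∈ ℝ there exists a generalized eigenvalue λ of the pencil (A, B) (i.e., a real number λ with det(A − λB) = 0) such that |λ − α| ≤ ‖(A − αB)u‖/(λ₁(B)·‖u‖). -/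
open Matrix

open scoped InnerProductSpace MatrixOrder ComplexOrder

/-!
Write `B = S²` with `S = √B` and `C = S⁻¹ A S⁻¹`, so that `A - t B = S (C - t) S`: the generalized
eigenvalues of `(A, B)` are the eigenvalues `μᵢ` of the symmetric matrix `C`. Let `μ` be the one
closest to `α`. With `w = S u` and `y = (C - α) w`, the residual is `(A - α B) u = S y`, and
`‖S y‖² = yᵀ B y ≥ λ₁ ‖y‖²`, `‖y‖² ≥ (μ - α)² ‖w‖²` (expand `w` in an eigenbasis of `C`),
`‖w‖² = uᵀ B u ≥ λ₁ ‖u‖²`.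
-/

theorem abs_le_sqrt_div_mul_sqrt {δ c q r : ℝ} (hc : 0 < c) (hq : 0 < q)
    (h : (c * δ) ^ 2 * q ≤ r) : |δ| ≤ √r / (c * √q) := by
  rw [le_div_iff₀ (by positivity)]
  refine Real.le_sqrt_of_sq_le ?_
  calc (|δ| * (c * √q)) ^ 2 = (c * δ) ^ 2 * q := by
        rw [mul_pow, mul_pow, sq_abs, Real.sq_sqrt hq.le]; ring
    _ ≤ r := h

namespace LinearMap.IsSymmetric

variable {𝕜 E ι : Type*} [RCLike 𝕜] [NormedAddCommGroup E] [InnerProductSpace 𝕜 E] [Fintype ι]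
  {T : E →ₗ[𝕜] E} {b : OrthonormalBasis ι 𝕜 E} {ν : ι → ℝ}

theorem re_inner_map_self_eq_sum (hT : T.IsSymmetric) (hb : ∀ i, T (b i) = (ν i : 𝕜) • b i)
    (x : E) : RCLike.re ⟪T x, x⟫_𝕜 = ∑ i, ν i * ‖⟪b i, x⟫_𝕜‖ ^ 2 := by
  rw [← b.sum_inner_mul_inner, map_sum]
  refine Finset.sum_congr rfl fun i _ => ?_
  rw [hT, hb, inner_smul_right, ← inner_conj_symm x, mul_assoc, RCLike.conj_mul]
  norm_cast

theorem mul_norm_sq_le_re_inner_map_self (hT : T.IsSymmetric)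
    (hb : ∀ i, T (b i) = (ν i : 𝕜) • b i) {c : ℝ} (hc : ∀ i, c ≤ ν i) (x : E) :
    c * ‖x‖ ^ 2 ≤ RCLike.re ⟪T x, x⟫_𝕜 := by
  rw [hT.re_inner_map_self_eq_sum hb, ← b.sum_sq_norm_inner_right, Finset.mul_sum]
  gcongr with i
  exact hc i

end LinearMap.IsSymmetric

namespace Matrix

variable {n : Type*} [Fintype n]

theorem dotProduct_mulVec_self_of_isSymm {R : Type*} [CommSemiring R] {S : Matrix n n R}
    (hS : S.IsSymm) (y : n → R) : (S *ᵥ y) ⬝ᵥ (S *ᵥ y) = y ⬝ᵥ (S * S) *ᵥ y := by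
  rw [← mulVec_mulVec, dotProduct_mulVec, ← hS, vecMul_transpose, hS, dotProduct_comm]

variable [DecidableEq n] {𝕜 : Type*} [RCLike 𝕜]

theorem sub_smul_mul_self_eq {R : Type*} [CommRing R] {S : Matrix n n R} (hS : IsUnit S)
    (A : Matrix n n R) (t : R) : A - t • (S * S) = S * (S⁻¹ * A * S⁻¹ - t • 1) * S := by
  have hS' : IsUnit S.det := (isUnit_iff_isUnit_det S).mp hS
  simp only [Matrix.mul_sub, Matrix.sub_mul, Matrix.mul_smul, Matrix.smul_mul, mul_one,
    ← mul_assoc, mul_nonsing_inv _ hS', one_mul]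
  rw [mul_assoc _ S⁻¹ S, nonsing_inv_mul _ hS', mul_one]

theorem PosDef.exists_sqrt {B : Matrix n n 𝕜} (hB : B.PosDef) :
    ∃ S : Matrix n n 𝕜, S.IsHermitian ∧ S * S = B ∧ IsUnit S := by
  have hSS : CFC.sqrt B * CFC.sqrt B = B := CFC.sqrt_mul_sqrt_self B hB.posSemidef.nonneg
  exact ⟨CFC.sqrt B, (CFC.sqrt_nonneg B).posSemidef.isHermitian, hSS,
    isUnit_of_mul_isUnit_left (hSS.symm ▸ hB.isUnit)⟩

namespace IsHermitian

theorem eigenvectorBasis_ne_zero_s19 {C : Matrix n n 𝕜}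
    (hC : C.IsHermitian) (j : n) : (hC.eigenvectorBasis j).ofLp ≠ 0 :=
  (WithLp.ofLp_eq_zero 2).ne.mpr (hC.eigenvectorBasis.orthonormal.ne_zero j)

theorem det_sub_eigenvalues_smul_one {C : Matrix n n 𝕜}
    (hC : C.IsHermitian) (j : n) : (C - hC.eigenvalues j • (1 : Matrix n n 𝕜)).det = 0 := by
  refine exists_mulVec_eq_zero_iff.mp ⟨_, hC.eigenvectorBasis_ne_zero_s19 j, ?_⟩
  rw [sub_mulVec, hC.mulVec_eigenvectorBasis, smul_mulVec, one_mulVec, sub_self]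

theorem mul_dotProduct_self_le_s19 {ι : Type*} [Fintype ι] {M : Matrix n n ℝ} (hM : M.IsHermitian)
    (b : OrthonormalBasis ι ℝ (EuclideanSpace ℝ n)) {ν : ι → ℝ}
    (hb : ∀ i, M *ᵥ b i = ν i • b i) {c : ℝ} (hc : ∀ i, c ≤ ν i) (x : n → ℝ) :
    c * (x ⬝ᵥ x) ≤ x ⬝ᵥ M *ᵥ x := by
  have h := (isSymmetric_toEuclideanLin_iff.mpr hM).mul_norm_sq_le_re_inner_map_self
    (b := b) (fun i => congrArg (WithLp.toLp 2) (hb i)) hc (WithLp.toLp 2 x)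
  rw [EuclideanSpace.norm_sq_eq, EuclideanSpace.inner_toLp_toLp] at h
  simpa [dotProduct, sq, mul_comm] using h

theorem sq_mul_dotProduct_self_le {C : Matrix n n ℝ} (hC : C.IsHermitian) {α δ : ℝ}
    (hδ : ∀ i, δ ^ 2 ≤ (hC.eigenvalues i - α) ^ 2) (w : n → ℝ) :
    δ ^ 2 * (w ⬝ᵥ w) ≤ ((C - α • 1) *ᵥ w) ⬝ᵥ ((C - α • 1) *ᵥ w) := by
  have hX : (C - α • 1).IsHermitian := hC.sub (isHermitian_one.smul (IsSelfAdjoint.all α))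
  have hXb : ∀ i, (C - α • 1) *ᵥ (hC.eigenvectorBasis i).ofLp =
      (hC.eigenvalues i - α) • (hC.eigenvectorBasis i).ofLp := fun i => by
    rw [sub_mulVec, hC.mulVec_eigenvectorBasis, smul_mulVec, one_mulVec, sub_smul]
  rw [dotProduct_mulVec_self_of_isSymm (isHermitian_iff_isSymm.mp hX)]
  refine (sq (C - α • 1) ▸ hX.pow 2).mul_dotProduct_self_le_s19 hC.eigenvectorBasis
    (fun i => ?_) hδ w
  rw [← mulVec_mulVec, hXb, mulVec_smul, hXb, smul_smul, sq]

theorem sq_mul_dotProduct_self_le_sandwich {S C : Matrix n n ℝ} (hC : C.IsHermitian)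
    (hS : S.IsHermitian) {c α δ : ℝ} (hc₀ : 0 ≤ c) (hc : ∀ z, c * (z ⬝ᵥ z) ≤ z ⬝ᵥ (S * S) *ᵥ z)
    (hδ : ∀ i, δ ^ 2 ≤ (hC.eigenvalues i - α) ^ 2) (u : n → ℝ) :
    (c * δ) ^ 2 * (u ⬝ᵥ u) ≤
      ((S * (C - α • 1) * S) *ᵥ u) ⬝ᵥ ((S * (C - α • 1) * S) *ᵥ u) := by
  have hS' : S.IsSymm := isHermitian_iff_isSymm.mp hS
  set w := S *ᵥ u
  set y := (C - α • 1) *ᵥ w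
  have hy : (S * (C - α • 1) * S) *ᵥ u = S *ᵥ y := by simp only [y, w, mulVec_mulVec, mul_assoc]
  rw [hy, dotProduct_mulVec_self_of_isSymm hS']
  calc (c * δ) ^ 2 * (u ⬝ᵥ u) = c * (δ ^ 2 * (c * (u ⬝ᵥ u))) := by ring
    _ ≤ c * (δ ^ 2 * (w ⬝ᵥ w)) := by
      rw [dotProduct_mulVec_self_of_isSymm hS']
      gcongr
      exact hc u
    _ ≤ c * (y ⬝ᵥ y) := by
      gcongr
      exact hC.sq_mul_dotProduct_self_le hδ w
    _ ≤ y ⬝ᵥ (S * S) *ᵥ y := hc y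

end IsHermitian

end Matrix

theorem gen_pencil_residual_bound_general
    {n : ℕ} (A B : Matrix (Fin n) (Fin n) ℝ) (hA : A.IsSymm) (hB : B.PosDef)
    (lam1B : ℝ) (hlam1Bpos : 0 < lam1B)
    (hlam1Bmin : ∀ (ν : ℝ) (v : Fin n → ℝ), v ≠ 0 → B.mulVec v = ν • v → lam1B ≤ ν)
    (u : Fin n → ℝ) (hu : u ≠ 0) :
    ∀ α : ℝ, ∃ lam : ℝ, (A - lam • B).det = 0 ∧
      |lam - α| ≤ Real.sqrt (((A - α • B).mulVec u) ⬝ᵥ ((A - α • B).mulVec u)) /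
        (lam1B * Real.sqrt (u ⬝ᵥ u)) := by
  intro α
  obtain ⟨S, hS, rfl, hSunit⟩ := hB.exists_sqrt
  have hC : (S⁻¹ * A * S⁻¹).IsHermitian := by
    simpa only [hS.inv.eq] using
      isHermitian_conjTranspose_mul_mul S⁻¹ (isHermitian_iff_isSymm.mpr hA)
  have hB_quad : ∀ z, lam1B * (z ⬝ᵥ z) ≤ z ⬝ᵥ (S * S) *ᵥ z :=
    hB.1.mul_dotProduct_self_le_s19 _ hB.1.mulVec_eigenvectorBasis fun i =>
      hlam1Bmin _ _ (hB.1.eigenvectorBasis_ne_zero_s19 i) (hB.1.mulVec_eigenvectorBasis i)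
  obtain ⟨i₀, -⟩ := Function.ne_iff.mp hu
  have : Nonempty (Fin n) := ⟨i₀⟩
  obtain ⟨j, hj⟩ := Finite.exists_min fun i => |hC.eigenvalues i - α|
  refine ⟨hC.eigenvalues j, ?_, ?_⟩ <;> rw [sub_smul_mul_self_eq hSunit]
  · rw [det_mul, det_mul, hC.det_sub_eigenvalues_smul_one, mul_zero, zero_mul]
  · have hu_pos : 0 < u ⬝ᵥ u :=
      (Fintype.sum_nonneg fun i => mul_self_nonneg (u i)).lt_of_ne'
        (dotProduct_self_eq_zero.not.mpr hu)
    exact abs_le_sqrt_div_mul_sqrt hlam1Bpos hu_pos <|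
      hC.sq_mul_dotProduct_self_le_sandwich hS hlam1Bpos.le hB_quad
        (fun i => sq_le_sq.mpr (hj i)) u

/-- For symmetric `A`, SPD `B` with smallest eigenvalue `λ₁(B) > 0`, and
nonzero `u`, for every `α ∈ ℝ` there exists a generalized eigenvalue `λ` of the pencil
`(A, B)` (i.e., `det(A − λB) = 0`) such that `|λ − α| ≤ ‖(A − αB)u‖/(λ₁(B)·‖u‖)`
(Euclidean norms written as `√(v ⬝ᵥ v)`). -/
theorem gen_pencil_residual_bound
    {n : ℕ} (A B : Matrix (Fin n) (Fin n) ℝ) (hA : A.IsSymm) (hB : B.PosDef)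
    (lam1B : ℝ) (hlam1Bpos : 0 < lam1B)
    (hlam1B : ∃ v : Fin n → ℝ, v ≠ 0 ∧ B.mulVec v = lam1B • v)
    (hlam1Bmin : ∀ (ν : ℝ) (v : Fin n → ℝ), v ≠ 0 → B.mulVec v = ν • v → lam1B ≤ ν)
    (u : Fin n → ℝ) (hu : u ≠ 0) :
    ∀ α : ℝ, ∃ lam : ℝ, (A - lam • B).det = 0 ∧
      |lam - α| ≤ Real.sqrt (((A - α • B).mulVec u) ⬝ᵥ ((A - α • B).mulVec u)) /
        (lam1B * Real.sqrt (u ⬝ᵥ u)) :=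
  gen_pencil_residual_bound_general A B hA hB lam1B hlam1Bpos hlam1Bmin u hu
end
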